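/- arXiv:1603.01194 — 5 statements merged into one kernel-verified Lean document; each statement's English description precedes it below -/
import Mathlib

section
/- Define a process (X_n)_{n≥0} with X_0 = 0, together with times N_k^E, N_k^W, as follows: N_1^E = 0; N_k^W = inf{n ≥ N_k^E : X_n = 1} and N_{k+1}^E = inf{n ≥ N_k^W : X_n = 0} (with inf ∅ = ∞); and for n ≥ 1, X_n − X_{n−1} = L_{n−1} − L_n if N_k^E < n ≤ N_k^W for some k, while X_n − X_{n−1} = R_n − R_{n−1} if N_k^W < n ≤ N_{k+1}^E for some k. (This recursion is well defined, since whether n lies in one of these intervals is determined by X_0, …, X_{n−1}.) Then the increments (X_n − X_{n−1})_{n≥1} are independent and identically distributed, each uniformly distributed on {−1, 0, 1}; in particular, the process X has the same law as the random walk L. -/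
open MeasureTheory ProbabilityTheory
open scoped ENNReal

/-!
The phase of the walk at time `n` (W: waiting to hit `1`, driven by `-ΔL`; E: waiting to hit `0`,
driven by `ΔR`) is a function of `ξ_1, …, ξ_n`, so `X_{n+1} - X_n = φ_n(ξ_{n+1})` where the map
`φ_n ∈ {-fst, snd}` is chosen predictably. Both maps push the law of `ξ_{n+1}` forward to the
uniform law on `{-1, 0, 1}`, and `ξ_{n+1}` is independent of the past; hence every increment is
uniform and independent of the earlier ones. The increments `fst ∘ ξ_{n+1}` of `L` are of the same
kind (with a constant choice), so `X` and `L` are partial sums of sequences with the same law.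
-/

namespace ExcursionWalk

noncomputable def firstHit (s : ℕ∞) (p : ℕ → Prop) : ℕ∞ :=
  sInf {m : ℕ∞ | ∃ n : ℕ, m = (n : ℕ∞) ∧ s ≤ (n : ℕ∞) ∧ p n}

def Pending (s : ℕ∞) (p : ℕ → Prop) (n : ℕ) : Prop :=
  ∃ m : ℕ, s = m ∧ m ≤ n ∧ ∀ j, m ≤ j → j ≤ n → ¬ p j

namespace Pending

variable {s : ℕ∞} {p : ℕ → Prop} {n : ℕ}

theorem lt_succ (h : Pending s p n) : s < ((n + 1 : ℕ) : ℕ∞) := by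
  obtain ⟨m, rfl, hmn, -⟩ := h
  exact_mod_cast Nat.lt_succ_of_le hmn

theorem succ_le_firstHit (h : Pending s p n) : ((n + 1 : ℕ) : ℕ∞) ≤ firstHit s p := by
  obtain ⟨m, rfl, -, hnot⟩ := h
  refine le_sInf ?_
  rintro _ ⟨j, rfl, hmj, hj⟩
  by_contra! hlt
  have hjn : j < n + 1 := by exact_mod_cast hlt
  exact hnot j (by exact_mod_cast hmj) (Nat.le_of_lt_succ hjn) hj

theorem firstHit_eq (h : Pending s p n) (hp : p (n + 1)) : firstHit s p = ((n + 1 : ℕ) : ℕ∞) :=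
  le_antisymm (sInf_le ⟨n + 1, rfl, h.lt_succ.le, hp⟩) h.succ_le_firstHit

theorem succ (h : Pending s p n) (hp : ¬ p (n + 1)) : Pending s p (n + 1) := by
  obtain ⟨m, rfl, hmn, hnot⟩ := h
  refine ⟨m, rfl, hmn.trans n.le_succ, fun j hmj hjn => ?_⟩
  rcases hjn.lt_or_eq with hjn | rfl
  · exact hnot j hmj (Nat.le_of_lt_succ hjn)
  · exact hp

theorem self (hp : ¬ p n) : Pending (n : ℕ∞) p n :=
  ⟨n, rfl, le_rfl, fun _ hnj hjn => le_antisymm hjn hnj ▸ hp⟩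

end Pending

def phaseStep (w : Bool) (e : ℤ × ℤ) : ℤ := if w then -e.1 else e.2

def nextPhase (w : Bool) (x : ℤ) : Bool := if w then x ≠ 1 else x = 0

/-- Phase (`true` for W, `false` for E) and position of `X` after reading the steps `v`. -/
def state : (n : ℕ) → (Fin n → ℤ × ℤ) → Bool × ℤ
  | 0, _ => (true, 0)
  | n + 1, v =>
    let x := (state n (Fin.init v)).2 + phaseStep (state n (Fin.init v)).1 (v (Fin.last n))
    (nextPhase (state n (Fin.init v)).1 x, x)

def walk (a : ℕ → ℤ × ℤ) (n : ℕ) : Bool × ℤ := state n fun i => a i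

theorem walk_succ (a : ℕ → ℤ × ℤ) (n : ℕ) :
    walk a (n + 1) = (nextPhase (walk a n).1 ((walk a n).2 + phaseStep (walk a n).1 (a n)),
      (walk a n).2 + phaseStep (walk a n).1 (a n)) := rfl

def PhaseInv (x : ℕ → ℤ) (ne nw : ℕ → ℕ∞) (w : Bool) (n : ℕ) : Prop :=
  if w then ∃ k, 1 ≤ k ∧ Pending (ne k) (x · = 1) n else ∃ k, 1 ≤ k ∧ Pending (nw k) (x · = 0) n

section Deterministic

variable {a : ℕ → ℤ × ℤ} {x : ℕ → ℤ} {ne nw : ℕ → ℕ∞}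
  (hx0 : x 0 = 0) (hne1 : ne 1 = 0)
  (hnw : ∀ k, 1 ≤ k → nw k = firstHit (ne k) (x · = 1))
  (hne : ∀ k, 1 ≤ k → ne (k + 1) = firstHit (nw k) (x · = 0))
  (hxW : ∀ n, (∃ k, 1 ≤ k ∧ ne k < ((n + 1 : ℕ) : ℕ∞) ∧ ((n + 1 : ℕ) : ℕ∞) ≤ nw k) →
    x (n + 1) - x n = -(a n).1)
  (hxE : ∀ n, (∃ k, 1 ≤ k ∧ nw k < ((n + 1 : ℕ) : ℕ∞) ∧ ((n + 1 : ℕ) : ℕ∞) ≤ ne (k + 1)) →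
    x (n + 1) - x n = (a n).2)
include hnw hne hxW hxE

theorem PhaseInv.succ {n : ℕ} {w : Bool} (h : PhaseInv x ne nw w n) :
    x (n + 1) = x n + phaseStep w (a n) ∧
      PhaseInv x ne nw (nextPhase w (x (n + 1))) (n + 1) := by
  cases w with
  | true =>
    obtain ⟨k, hk, hpend⟩ := h
    have hle := hpend.succ_le_firstHit
    rw [← hnw k hk] at hle
    refine ⟨by rw [phaseStep, if_pos rfl, ← hxW n ⟨k, hk, hpend.lt_succ, hle⟩]; ring, ?_⟩
    by_cases hx : x (n + 1) = 1
    · simp only [PhaseInv, nextPhase, hx, if_true]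
      refine ⟨k, hk, ?_⟩
      rw [hnw k hk, hpend.firstHit_eq hx]
      exact Pending.self (by simp [hx])
    · simp only [PhaseInv, nextPhase, hx, if_true, ne_eq, not_false_eq_true, decide_true]
      exact ⟨k, hk, hpend.succ hx⟩
  | false =>
    obtain ⟨k, hk, hpend⟩ := h
    have hle := hpend.succ_le_firstHit
    rw [← hne k hk] at hle
    refine ⟨by rw [phaseStep, if_neg Bool.false_ne_true, ← hxE n ⟨k, hk, hpend.lt_succ, hle⟩]; ring,
      ?_⟩
    by_cases hx : x (n + 1) = 0
    · simp only [PhaseInv, nextPhase, hx]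
      refine ⟨k + 1, le_add_self, ?_⟩
      rw [hne k hk, hpend.firstHit_eq hx]
      exact Pending.self (by simp [hx])
    · simp only [PhaseInv, nextPhase, hx, decide_false]
      exact ⟨k, hk, hpend.succ hx⟩

include hx0 hne1 in
theorem eq_walk_and_phaseInv (n : ℕ) : x n = (walk a n).2 ∧ PhaseInv x ne nw (walk a n).1 n := by
  induction n with
  | zero => exact ⟨hx0, 1, le_rfl, hne1 ▸ Pending.self (by simp [hx0])⟩
  | succ n ih =>
    obtain ⟨hxn, hinv⟩ := ih
    obtain ⟨hstep, hinv'⟩ := hinv.succ hnw hne hxW hxE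
    rw [walk_succ, ← hxn, ← hstep]
    exact ⟨rfl, hinv'⟩

include hx0 hne1 in
theorem sub_eq_phaseStep_walk (n : ℕ) : x (n + 1) - x n = phaseStep (walk a n).1 (a n) := by
  obtain ⟨hxn, hinv⟩ := eq_walk_and_phaseInv hx0 hne1 hnw hne hxW hxE n
  rw [(hinv.succ hnw hne hxW hxE).1, hxn]
  ring

end Deterministic

section Predictable

variable {Ω β γ δ : Type*} [MeasurableSpace Ω] [MeasurableSpace β] [MeasurableSpace γ]
  [MeasurableSpace δ] {P : Measure Ω} {ν : Measure δ}

theorem measure_preimage_inter_eq_mul_of_indepFun [IsFiniteMeasure P]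
    {V : Ω → γ} {E : Ω → β} (hV : Measurable V) (hE : Measurable E) (hVE : IndepFun V E P)
    {h : γ → β → δ} (hh : Measurable (Function.uncurry h)) (hν : ∀ v, (P.map E).map (h v) = ν)
    {B : Set γ} (hB : MeasurableSet B) {C : Set δ} (hC : MeasurableSet C) :
    P (V ⁻¹' B ∩ (fun ω => h (V ω) (E ω)) ⁻¹' C) = P (V ⁻¹' B) * ν C := by
  have hS : MeasurableSet (B ×ˢ Set.univ ∩ Function.uncurry h ⁻¹' C) :=
    (hB.prod .univ).inter (hh hC)
  calc P (V ⁻¹' B ∩ (fun ω => h (V ω) (E ω)) ⁻¹' C)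
      = P.map (fun ω => (V ω, E ω)) (B ×ˢ Set.univ ∩ Function.uncurry h ⁻¹' C) := by
        rw [Measure.map_apply (hV.prodMk hE) hS]
        congr 1
        ext ω
        simp
    _ = ∫⁻ v, (P.map E) (Prod.mk v ⁻¹' (B ×ˢ Set.univ ∩ Function.uncurry h ⁻¹' C)) ∂P.map V := by
        rw [(indepFun_iff_map_prod_eq_prod_map_map hV.aemeasurable hE.aemeasurable).1 hVE,
          Measure.prod_apply hS]
    _ = ∫⁻ v, B.indicator (fun _ => ν C) v ∂P.map V := by
        refine lintegral_congr fun v => ?_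
        by_cases hv : v ∈ B
        · simp only [hv, Set.indicator_of_mem, ← hν v]
          have hhv : Measurable (h v) := hh.comp measurable_prodMk_left
          rw [Measure.map_apply hhv hC]
          congr 1
          ext e
          simp [hv]
        · simp [hv]
    _ = P (V ⁻¹' B) * ν C := by
        rw [lintegral_indicator_const hB, Measure.map_apply hV hB, mul_comm]

theorem _root_.ProbabilityTheory.iIndepFun.indepFun_finPrefix {η : ℕ → Ω → β} (hη : ∀ n, Measurable (η n))
    (h : iIndepFun η P) (n : ℕ) : IndepFun (fun ω (i : Fin n) => η i ω) (η n) P := by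
  have hsplit := h.indepFun_finset (Finset.range n) {n} (by simp) hη
  exact hsplit.comp (φ := fun u (i : Fin n) => u ⟨i, Finset.mem_range.2 i.2⟩)
    (ψ := fun u => u ⟨n, Finset.mem_singleton_self n⟩)
    (measurable_pi_lambda _ fun _ => measurable_pi_apply _)
    (measurable_pi_apply (X := fun _ : ({n} : Finset ℕ) => β) _)

variable {η : ℕ → Ω → β} {g : (n : ℕ) → (Fin n → β) → β → δ}

theorem measurable_predictable (hη : ∀ n, Measurable (η n))
    (hg : ∀ n, Measurable (Function.uncurry (g n))) (n : ℕ) :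
    Measurable fun ω => g n (fun j => η j ω) (η n ω) :=
  (hg n).comp (f := fun ω => (fun j : Fin n => η j ω, η n ω)) (by fun_prop)

variable [IsProbabilityMeasure P]

theorem measure_iInter_range_predictable_preimage (hη : ∀ n, Measurable (η n))
    (hind : iIndepFun η P) (hg : ∀ n, Measurable (Function.uncurry (g n)))
    (hν : ∀ n v, (P.map (η n)).map (g n v) = ν) (n : ℕ) {t : ℕ → Set δ}
    (ht : ∀ i, MeasurableSet (t i)) :
    P (⋂ i ∈ Finset.range n, (fun ω => g i (fun j => η j ω) (η i ω)) ⁻¹' t i)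
      = ∏ i ∈ Finset.range n, ν (t i) := by
  induction n with
  | zero => simp
  | succ n ih =>
    set V : Ω → Fin n → β := fun ω i => η i ω
    have hV : Measurable V := measurable_pi_lambda _ fun i => hη i
    set B : Set (Fin n → β) :=
      ⋂ i : Fin n, (fun v => g i (fun j => v (Fin.castLE i.2.le j)) (v i)) ⁻¹' t i
    have hB : MeasurableSet B := by
      refine MeasurableSet.iInter fun i => ?_
      have hgi : Measurable fun v : Fin n → β => g i (fun j => v (Fin.castLE i.2.le j)) (v i) :=
        (hg i).comp (f := fun v : Fin n → β => (fun j => v (Fin.castLE i.2.le j), v i))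
          (by fun_prop)
      exact hgi (ht i)
    have hpast : (⋂ i ∈ Finset.range n, (fun ω => g i (fun j => η j ω) (η i ω)) ⁻¹' t i)
        = V ⁻¹' B := by
      ext ω
      simp [V, B, Fin.forall_iff]
    rw [Finset.range_add_one, Finset.set_biInter_insert, Set.inter_comm, hpast,
      Finset.prod_insert Finset.notMem_range_self, mul_comm, ← ih, hpast]
    exact measure_preimage_inter_eq_mul_of_indepFun hV (hη n)
      (hind.indepFun_finPrefix hη n) (hg n) (hν n) hB (ht n)

theorem map_predictable_eq_infinitePi [IsProbabilityMeasure ν] (hη : ∀ n, Measurable (η n))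
    (hind : iIndepFun η P) (hg : ∀ n, Measurable (Function.uncurry (g n)))
    (hν : ∀ n v, (P.map (η n)).map (g n v) = ν) :
    P.map (fun ω n => g n (fun j => η j ω) (η n ω)) = Measure.infinitePi fun _ => ν := by
  classical
  have hD := measurable_pi_lambda _ (measurable_predictable hη hg)
  refine Measure.eq_infinitePi _ fun s t ht => ?_
  set N := s.sup id + 1
  have hsN : s ⊆ Finset.range N := Finset.subset_range_sup_succ s
  set t' : ℕ → Set δ := fun i => if i ∈ s then t i else Set.univ
  have ht' : ∀ i, MeasurableSet (t' i) := fun i => by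
    by_cases hi : i ∈ s <;> simp [t', hi, ht i]
  have hbox : (fun ω n => g n (fun j => η j ω) (η n ω)) ⁻¹' Set.pi s t
      = ⋂ i ∈ Finset.range N, (fun ω => g i (fun j => η j ω) (η i ω)) ⁻¹' t' i := by
    ext ω
    simp only [Set.mem_preimage, Set.mem_pi, Finset.mem_coe, Set.mem_iInter, t']
    refine ⟨fun h i _ => ?_, fun h i hi => by simpa [hi] using h i (hsN hi)⟩
    split_ifs with hi
    exacts [h i hi, Set.mem_univ _]
  rw [Measure.map_apply hD (.pi s.countable_toSet fun i _ => ht i), hbox,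
    measure_iInter_range_predictable_preimage hη hind hg hν N ht',
    ← Finset.prod_subset hsN fun i _ hi => by simp [t', hi]]
  exact Finset.prod_congr rfl fun i hi => by simp [t', hi]

theorem iIndepFun_predictable [IsProbabilityMeasure ν] (hη : ∀ n, Measurable (η n))
    (hind : iIndepFun η P) (hg : ∀ n, Measurable (Function.uncurry (g n)))
    (hν : ∀ n v, (P.map (η n)).map (g n v) = ν) :
    iIndepFun (fun n ω => g n (fun j => η j ω) (η n ω)) P ∧
      ∀ n, P.map (fun ω => g n (fun j => η j ω) (η n ω)) = ν := by
  have hD := measurable_predictable hη hg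
  have hlaw := map_predictable_eq_infinitePi hη hind hg hν
  have hmarg : ∀ n, P.map (fun ω => g n (fun j => η j ω) (η n ω)) = ν := fun n => by
    rw [← Measure.infinitePi_map_eval (fun _ => ν) n, ← hlaw,
      Measure.map_map (measurable_pi_apply n) (measurable_pi_lambda _ hD)]
    rfl
  refine ⟨(iIndepFun_iff_map_fun_eq_infinitePi_map hD).2 ?_, hmarg⟩
  simp_rw [hmarg]
  exact hlaw

end Predictable

noncomputable def stepLaw : Measure (ℤ × ℤ) :=
  (3 : ℝ≥0∞)⁻¹ • (Measure.dirac (1, 0) + Measure.dirac (0, -1) + Measure.dirac (-1, 1))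

noncomputable def uniformSign : Measure ℤ :=
  (3 : ℝ≥0∞)⁻¹ • (Measure.dirac (-1) + Measure.dirac 0 + Measure.dirac 1)

instance : IsProbabilityMeasure uniformSign :=
  ⟨by simp [uniformSign, ENNReal.inv_three_add_inv_three]⟩

theorem map_phaseStep_stepLaw (w : Bool) : stepLaw.map (phaseStep w) = uniformSign := by
  cases w <;> simp [stepLaw, uniformSign, phaseStep, Measure.map_smul, Measure.map_add,
    Measurable.of_discrete]
  abel

theorem map_fst_stepLaw : stepLaw.map Prod.fst = uniformSign := by
  simp [stepLaw, uniformSign, Measure.map_smul, Measure.map_add, measurable_fst]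
  abel

theorem map_eq_map_of_map_increments_eq {Ω G : Type*} [MeasurableSpace Ω] [AddCommGroup G]
    [MeasurableSpace G] [MeasurableAdd₂ G] {P : Measure Ω} {Y Z : Ω → ℕ → G}
    (hY0 : ∀ ω, Y ω 0 = 0) (hZ0 : ∀ ω, Z ω 0 = 0)
    (hY : Measurable fun ω n => Y ω (n + 1) - Y ω n)
    (hZ : Measurable fun ω n => Z ω (n + 1) - Z ω n)
    (h : P.map (fun ω n => Y ω (n + 1) - Y ω n) = P.map (fun ω n => Z ω (n + 1) - Z ω n)) :
    P.map Y = P.map Z := by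
  set S : (ℕ → G) → ℕ → G := fun u n => ∑ j ∈ Finset.range n, u j
  have hS : Measurable S :=
    measurable_pi_lambda _ fun n => Finset.measurable_sum _ fun j _ => measurable_pi_apply j
  have hpartial : ∀ W : Ω → ℕ → G, (∀ ω, W ω 0 = 0) →
      W = S ∘ fun ω n => W ω (n + 1) - W ω n := fun W hW0 => by
    funext ω n
    simp [S, Finset.sum_range_sub (W ω), hW0]
  rw [hpartial Y hY0, hpartial Z hZ0, ← Measure.map_map hS hY, ← Measure.map_map hS hZ, h]

end ExcursionWalk

open ExcursionWalk

/-- Let `(ξ_j)_{j≥1}` be i.i.d. random vectors, each uniform on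
`{(1,0), (0,-1), (-1,1)} ⊂ ℤ²`, and let `Z_n = (L_n, R_n) = ∑_{j=1}^n ξ_j`.  Define `X` with
`X_0 = 0` together with times `N_k^E`, `N_k^W` by: `N_1^E = 0`,
`N_k^W = inf{n ≥ N_k^E : X_n = 1}`, `N_{k+1}^E = inf{n ≥ N_k^W : X_n = 0}` (with `inf ∅ = ∞`),
and for `n ≥ 1`: `X_n − X_{n−1} = L_{n−1} − L_n` if `N_k^E < n ≤ N_k^W` for some `k`, while
`X_n − X_{n−1} = R_n − R_{n−1}` if `N_k^W < n ≤ N_{k+1}^E` for some `k`.  Then the increments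
`(X_n − X_{n−1})_{n≥1}` are i.i.d., each uniform on `{−1, 0, 1}`; in particular the process
`X` has the same law as the random walk `L`. -/
theorem stmt_1
    {Ω : Type*} [MeasurableSpace Ω] (P : Measure Ω) [IsProbabilityMeasure P]
    (ξ : ℕ → Ω → ℤ × ℤ)
    (hξmeas : ∀ j, Measurable (ξ j))
    (hξindep : iIndepFun (fun j : ℕ => ξ (j + 1)) P)
    (hξlaw : ∀ j, 1 ≤ j → Measure.map (ξ j) P
      = (3 : ℝ≥0∞)⁻¹ • (Measure.dirac ((1 : ℤ), (0 : ℤ))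
          + Measure.dirac ((0 : ℤ), (-1 : ℤ)) + Measure.dirac ((-1 : ℤ), (1 : ℤ))))
    (L R : Ω → ℕ → ℤ)
    (hL : ∀ ω n, L ω n = ∑ j ∈ Finset.Icc 1 n, (ξ j ω).1)
    (hR : ∀ ω n, R ω n = ∑ j ∈ Finset.Icc 1 n, (ξ j ω).2)
    (X : Ω → ℕ → ℤ) (NE NW : Ω → ℕ → ℕ∞)
    (hX0 : ∀ ω, X ω 0 = 0)
    (hNE1 : ∀ ω, NE ω 1 = 0)
    (hNW : ∀ ω k, 1 ≤ k →
      NW ω k = sInf {m : ℕ∞ | ∃ n : ℕ, m = (n : ℕ∞) ∧ NE ω k ≤ (n : ℕ∞) ∧ X ω n = 1})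
    (hNE : ∀ ω k, 1 ≤ k →
      NE ω (k + 1) = sInf {m : ℕ∞ | ∃ n : ℕ, m = (n : ℕ∞) ∧ NW ω k ≤ (n : ℕ∞) ∧ X ω n = 0})
    (hXW : ∀ ω n, (∃ k, 1 ≤ k ∧ NE ω k < ((n + 1 : ℕ) : ℕ∞) ∧ ((n + 1 : ℕ) : ℕ∞) ≤ NW ω k) →
      X ω (n + 1) - X ω n = L ω n - L ω (n + 1))
    (hXE : ∀ ω n,
      (∃ k, 1 ≤ k ∧ NW ω k < ((n + 1 : ℕ) : ℕ∞) ∧ ((n + 1 : ℕ) : ℕ∞) ≤ NE ω (k + 1)) →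
      X ω (n + 1) - X ω n = R ω (n + 1) - R ω n) :
    -- the increments of `X` are independent, identically distributed, uniform on `{-1,0,1}`,
    iIndepFun (fun n ω => X ω (n + 1) - X ω n) P
    ∧ (∀ n : ℕ, Measure.map (fun ω => X ω (n + 1) - X ω n) P
        = (3 : ℝ≥0∞)⁻¹ • (Measure.dirac (-1 : ℤ) + Measure.dirac (0 : ℤ)
            + Measure.dirac (1 : ℤ)))
    -- and in particular the process `X` has the same law as the random walk `L`
    ∧ Measure.map (fun ω => X ω) P = Measure.map (fun ω => L ω) P := by
  set η : ℕ → Ω → ℤ × ℤ := fun j => ξ (j + 1)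
  have hη : ∀ n, Measurable (η n) := fun n => hξmeas (n + 1)
  have hηlaw : ∀ n, P.map (η n) = stepLaw := fun n => hξlaw (n + 1) (Nat.le_add_left 1 n)
  have hL0 : ∀ ω, L ω 0 = 0 := fun ω => by simp [hL]
  have hLinc : ∀ ω n, L ω (n + 1) - L ω n = (η n ω).1 := fun ω n => by
    simp [hL, η, Finset.sum_Icc_succ_top (Nat.le_add_left 1 n)]
  have hRinc : ∀ ω n, R ω (n + 1) - R ω n = (η n ω).2 := fun ω n => by
    simp [hR, η, Finset.sum_Icc_succ_top (Nat.le_add_left 1 n)]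
  have hXinc : ∀ ω n, X ω (n + 1) - X ω n = phaseStep (state n fun j => η j ω).1 (η n ω) := by
    refine fun ω => sub_eq_phaseStep_walk (hX0 ω) (hNE1 ω) (hNW ω) (hNE ω) (fun m hm => ?_)
      (fun m hm => (hXE ω m hm).trans (hRinc ω m))
    rw [hXW ω m hm, ← hLinc ω m]
    ring
  have hνX : ∀ n (v : Fin n → ℤ × ℤ), (P.map (η n)).map (phaseStep (state n v).1) = uniformSign :=
    fun n v => by rw [hηlaw, map_phaseStep_stepLaw]
  have hνL : ∀ n (_ : Fin n → ℤ × ℤ), (P.map (η n)).map Prod.fst = uniformSign :=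
    fun n _ => by rw [hηlaw, map_fst_stepLaw]
  have hg : ∀ {h : (n : ℕ) → (Fin n → ℤ × ℤ) → ℤ × ℤ → ℤ} n, Measurable (Function.uncurry (h n)) :=
    fun _ => .of_discrete
  refine ⟨?_, ?_, map_eq_map_of_map_increments_eq hX0 hL0 ?_ ?_ ?_⟩ <;> simp only [hXinc, hLinc]
  · exact (iIndepFun_predictable hη hξindep hg hνX).1
  · exact (iIndepFun_predictable hη hξindep hg hνX).2
  · exact measurable_pi_lambda _
      (measurable_predictable (g := fun n v e => phaseStep (state n v).1 e) hη hg)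
  · exact measurable_pi_lambda _ (measurable_predictable (g := fun _ _ e => e.1) hη hg)
  · exact (map_predictable_eq_infinitePi hη hξindep hg hνX).trans
      (map_predictable_eq_infinitePi hη hξindep hg hνL).symm
end

section
/- For every ε > 0 and every p > 0, one has M^p · P[ max_{1 ≤ k ≤ M} | k − (1/3)·𝔩_{N_k^W} | > M^{1/2+ε} ] → 0 as M → ∞, where M ranges over the positive integers. -/
open MeasureTheory ProbabilityTheory Filter Topology
open scoped ENNReal NNReal

/-!
Let `τ₀ < τ₁ < ⋯` be the visits of the walk to `0` and `Sᵢ` the step taken right after `τᵢ`.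
By the strong Markov property at the `τᵢ`, the `Sᵢ` are i.i.d. with the step law, so the number
`U(n)` of up-steps among `S₀, …, Sₙ₋₁` is binomial with parameters `n, 1/3`, and Hoeffding's
inequality gives `P(|U(n) - n/3| ≥ t) ≤ 2 exp(-2t²/n)`.

Pathwise, `N_k^W = τᵢ + 1` where `i` is the index of the `k`-th up-step, so `𝔩_{N_k^W} = i + 1`
and `U(i + 1) = k`. Hence `|k - 𝔩_{N_k^W}/3| > t` with `k ≤ M` forces `|U(n) - n/3| > t` for
some `n ≤ 3(M + t) + 1`, and a union bound over `n` bounds the probability by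
`14 M exp(-2t²/(7M))` when `t ≤ M`. For `t = M^{1/2+ε}` this is `14 M exp(-(2/7) M^{2ε})`,
which beats every power of `M`.
-/

theorem measureReal_le_abs_sum_sub_integral_le {Ω : Type*} [MeasurableSpace Ω] {P : Measure Ω}
    [IsProbabilityMeasure P] {Y : ℕ → Ω → ℝ} (hind : iIndepFun Y P)
    (hmeas : ∀ i, AEMeasurable (Y i) P) (hY : ∀ i ω, Y i ω ∈ Set.Icc (0 : ℝ) 1) (n : ℕ)
    {ε : ℝ} (hε : 0 ≤ ε) :
    P.real {ω | ε ≤ |∑ i ∈ Finset.range n, (Y i ω - P[Y i])|} ≤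
      2 * Real.exp (-(2 * ε ^ 2 / n)) := by
  have hsub : ∀ i, HasSubgaussianMGF (fun ω => Y i ω - P[Y i]) (1 / 4) P := fun i => by
    convert hasSubgaussianMGF_of_mem_Icc (hmeas i) (ae_of_all _ (hY i)) using 1
    ext
    norm_num
  have hind' : iIndepFun (fun i ω => Y i ω - P[Y i]) P :=
    hind.comp (fun i (x : ℝ) => x - ∫ ω, Y i ω ∂P) fun _ => measurable_sub_const _
  have hup := HasSubgaussianMGF.measure_sum_range_ge_le_of_iIndepFun hind' (n := n)
    (fun i _ => hsub i) hε
  have hlo := HasSubgaussianMGF.measure_sum_range_ge_le_of_iIndepFun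
    (hind'.comp (fun _ => Neg.neg) fun _ => measurable_neg) (n := n) (fun i _ => (hsub i).neg) hε
  have hexp : -ε ^ 2 / (2 * n * ((1 / 4 : ℝ≥0) : ℝ)) = -(2 * ε ^ 2 / n) := by
    rw [show 2 * n * ((1 / 4 : ℝ≥0) : ℝ) = n / 2 by push_cast; ring, div_div_eq_mul_div]
    ring
  rw [hexp] at hup hlo
  calc P.real {ω | ε ≤ |∑ i ∈ Finset.range n, (Y i ω - P[Y i])|}
      ≤ P.real ({ω | ε ≤ ∑ i ∈ Finset.range n, (Y i ω - P[Y i])} ∪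
          {ω | ε ≤ ∑ i ∈ Finset.range n, (Neg.neg ∘ fun ω => Y i ω - P[Y i]) ω}) := by
        refine measureReal_mono fun ω (hω : ε ≤ |_|) => ?_
        simp only [Set.mem_union, Set.mem_ofPred_eq, Function.comp_apply, Finset.sum_neg_distrib]
        exact le_abs.1 hω
    _ ≤ _ := (measureReal_union_le _ _).trans (add_le_add hup hlo)
    _ = _ := by ring

theorem tendsto_natCast_rpow_mul_exp_neg_rpow {q c δ : ℝ} (hc : 0 < c) (hδ : 0 < δ) :
    Tendsto (fun M : ℕ => (M : ℝ) ^ q * Real.exp (-(c * (M : ℝ) ^ δ))) atTop (𝓝 0) := by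
  refine ((tendsto_rpow_mul_exp_neg_mul_atTop_nhds_zero (q / δ) c hc).comp
    ((tendsto_rpow_atTop hδ).comp tendsto_natCast_atTop_atTop)).congr fun M => ?_
  simp only [Function.comp_apply, neg_mul]
  rw [← Real.rpow_mul (Nat.cast_nonneg M), mul_div_cancel₀ q hδ.ne']

theorem Real.rpow_one_half_add_sq {x : ℝ} (hx : 0 < x) (ε : ℝ) :
    (x ^ (1 / 2 + ε)) ^ 2 = x * x ^ (2 * ε) := by
  rw [← Real.rpow_natCast, ← Real.rpow_mul hx.le, Nat.cast_ofNat,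
    show (1 / 2 + ε) * 2 = 1 + 2 * ε by ring, Real.rpow_add hx, Real.rpow_one]

theorem Nat.count_congr_of_forall_lt {p q : ℕ → Prop} [DecidablePred p] [DecidablePred q]
    {n : ℕ} (h : ∀ k < n, p k ↔ q k) : Nat.count p n = Nat.count q n :=
  le_antisymm (Nat.count_mono_left fun k hk => (h k hk).1)
    (Nat.count_mono_left fun k hk => (h k hk).2)

theorem exists_abs_sub_div_three_gt {U : ℕ → ℕ} (hU : Monotone U) {m M : ℕ} (hm : 1 ≤ m)
    (hmM : U m ≤ M) {t : ℝ} (ht : 0 ≤ t) (h : t < |(U m : ℝ) - m / 3|) :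
    ∃ n ∈ Finset.Icc 1 (⌊3 * (M + t)⌋₊ + 1), t < |(U n : ℝ) - n / 3| := by
  have hMr : (U m : ℝ) ≤ M := by exact_mod_cast hmM
  rcases lt_abs.1 h with h | h
  · refine ⟨m, Finset.mem_Icc.2 ⟨hm, ?_⟩, h.trans_le (le_abs_self _)⟩
    have : m ≤ ⌊3 * (M + t)⌋₊ := Nat.le_floor (by linarith)
    omega
  · -- `U` is too small at `m`, hence already at the first `n > 3 (U m + t)`, which is `≤ m`.
    set n := ⌊3 * (U m + t)⌋₊ + 1
    have hn : 3 * (U m + t) < n := by push_cast [n]; exact Nat.lt_floor_add_one _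
    have hnm : n ≤ m := Nat.succ_le_of_lt <| (Nat.floor_lt (by positivity)).2 (by linarith)
    have hUn : (U n : ℝ) ≤ U m := by exact_mod_cast hU hnm
    refine ⟨n, Finset.mem_Icc.2 ⟨by omega, ?_⟩, lt_abs.2 (Or.inr (by linarith))⟩
    have := Nat.floor_le_floor (R := ℝ) (show 3 * (U m + t) ≤ 3 * (M + t) by linarith)
    omega

namespace ZeroVisits

/-- The time of the `(i+1)`-st visit of `x` to `0` (junk value `0` if there are fewer). -/
noncomputable def zeroTime (x : ℕ → ℤ) (i : ℕ) : ℕ := Nat.nth (fun n => x n = 0) i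

noncomputable def stepAfterZero (x : ℕ → ℤ) (i : ℕ) : ℤ := x (zeroTime x i + 1) - x (zeroTime x i)

noncomputable def upCount (x : ℕ → ℤ) (n : ℕ) : ℕ := Nat.count (fun i => stepAfterZero x i = 1) n

section Path

variable {x y : ℕ → ℤ}

theorem zeroTime_eq_iff {i s : ℕ} (hs : s ≠ 0) :
    zeroTime x i = s ↔ x s = 0 ∧ Nat.count (fun n => x n = 0) s = i := by
  constructor
  · rintro rfl
    exact ⟨Nat.nth_mem_of_ne_zero hs, Nat.count_nth (Nat.lt_card_toFinset_of_nth_ne_zero hs)⟩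
  · rintro ⟨hs0, rfl⟩
    exact Nat.nth_count hs0

theorem zeroTime_eq_of_eqOn {s i : ℕ} (hxy : ∀ m ≤ s, x m = y m)
    (hi : i < Nat.count (fun n => x n = 0) s) : zeroTime y i = zeroTime x i := by
  have hcard : ∀ hf : (Set.ofPred fun n => x n = 0).Finite, i < hf.toFinset.card :=
    fun hf => hi.trans_le (Nat.count_le_card hf s)
  have hlt : zeroTime x i < s := Nat.nth_lt_of_lt_count hi
  have hmem : y (zeroTime x i) = 0 := (hxy _ hlt.le) ▸ Nat.nth_mem i hcard
  have hcount : Nat.count (fun n => y n = 0) (zeroTime x i) = i := by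
    rw [← Nat.count_congr_of_forall_lt (p := fun n => x n = 0) fun k hk => by
      rw [hxy k (by omega)]]
    exact Nat.count_nth hcard
  have := Nat.nth_count (p := fun n => y n = 0) hmem
  rwa [hcount] at this

theorem exists_eq_of_abs_sub_le_one (hstep : ∀ n, |x (n + 1) - x n| ≤ 1) {a b : ℕ} {v : ℤ}
    (hab : a ≤ b) (ha : x a ≤ v) (hb : v ≤ x b) : ∃ c ∈ Set.Icc a b, x c = v := by
  induction b, hab using Nat.le_induction with
  | base => exact ⟨a, ⟨le_rfl, le_rfl⟩, le_antisymm ha hb⟩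
  | succ b hab ih =>
    by_cases hv : v ≤ x b
    · obtain ⟨c, hc, hcv⟩ := ih hv
      exact ⟨c, ⟨hc.1, hc.2.trans b.le_succ⟩, hcv⟩
    · have := abs_le.1 (hstep b)
      exact ⟨b + 1, ⟨hab.trans b.le_succ, le_rfl⟩, by omega⟩

theorem exists_zeroTime_of_isLeast_hit_one (hstep : ∀ n, |x (n + 1) - x n| ≤ 1) {m w : ℕ}
    (hm : x m = 0) (hw : IsLeast {n | m ≤ n ∧ x n = 1} w) :
    ∃ i, w = zeroTime x i + 1 ∧ stepAfterZero x i = 1 := by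
  -- The walk enters `1` at time `w` from `0`: coming from `2` it would have crossed `1` earlier.
  obtain ⟨⟨hmw, hw1⟩, hleast⟩ := hw
  have hmw' : m < w := hmw.lt_of_ne fun h => by rw [h, hw1] at hm; exact one_ne_zero hm
  obtain ⟨j, rfl⟩ : ∃ j, w = j + 1 := ⟨w - 1, by omega⟩
  have hmj : m ≤ j := by omega
  have hj0 : x j = 0 := by
    have hj1 : x j ≠ 1 := fun h => absurd (hleast ⟨hmj, h⟩) (by omega)
    have hj2 : ¬ 2 ≤ x j := fun h => by
      obtain ⟨c, hc, hc1⟩ := exists_eq_of_abs_sub_le_one hstep hmj (by omega : x m ≤ 1) (by omega)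
      exact absurd (hleast ⟨hc.1, hc1⟩) (by have := hc.2; omega)
    have := abs_le.1 (hstep j)
    omega
  refine ⟨Nat.count (fun n => x n = 0) j, ?_, ?_⟩ <;>
    simp only [stepAfterZero, zeroTime, Nat.nth_count (p := fun n => x n = 0) hj0, hw1, hj0,
      sub_zero]

theorem eqOn_of_sub_eq (h0 : x 0 = y 0) {s : ℕ}
    (h : ∀ j < s, x (j + 1) - x j = y (j + 1) - y j) : ∀ m ≤ s, x m = y m := by
  intro m hm
  induction m with
  | zero => exact h0
  | succ m ih => have := h m hm; have := ih (by omega); omega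

/-- Paths whose `(n+1)`-st visit to `0` happens at time `s`, the steps taken after the earlier
visits lying in the prescribed sets. Membership only depends on the path up to time `s`. -/
def blockSet (n s : ℕ) (A : ℕ → Set ℤ) : Set (ℕ → ℤ) :=
  {x | x s = 0 ∧ Nat.count (fun m => x m = 0) s = n ∧ ∀ i < n, stepAfterZero x i ∈ A i}

theorem zeroTime_of_mem_blockSet {n s : ℕ} {A : ℕ → Set ℤ} (hx : x ∈ blockSet n s A) :
    zeroTime x n = s := by
  rw [zeroTime, ← hx.2.1]
  exact Nat.nth_count hx.1

theorem mem_blockSet_of_eqOn {n s : ℕ} {A : ℕ → Set ℤ} (hxy : ∀ m ≤ s, x m = y m)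
    (hx : x ∈ blockSet n s A) : y ∈ blockSet n s A := by
  obtain ⟨hs, hcount, hA⟩ := hx
  refine ⟨hxy s le_rfl ▸ hs, ?_, fun i hi => ?_⟩
  · rw [← hcount]
    exact Nat.count_congr_of_forall_lt fun k hk => by rw [hxy k hk.le]
  · have hi' : i < Nat.count (fun m => x m = 0) s := hcount ▸ hi
    have hlt : zeroTime x i < s := Nat.nth_lt_of_lt_count hi'
    rw [stepAfterZero, zeroTime_eq_of_eqOn hxy hi', ← hxy _ hlt, ← hxy _ hlt.le]
    exact hA i hi

theorem infinite_zeros_of_isLeast {nE nW : ℕ → ℕ}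
    (hW : ∀ k, 1 ≤ k → IsLeast {n | nE k ≤ n ∧ x n = 1} (nW k))
    (hE : ∀ k, 1 ≤ k → IsLeast {n | nW k ≤ n ∧ x n = 0} (nE (k + 1))) :
    {n | x n = 0}.Infinite := by
  have hlt : ∀ k, 1 ≤ k → nE k < nE (k + 1) := fun k hk => by
    obtain ⟨⟨hEW, hW1⟩, -⟩ := hW k hk
    obtain ⟨⟨hWE, hE0⟩, -⟩ := hE k hk
    exact hEW.trans_lt (hWE.lt_of_ne fun h => by rw [h, hE0] at hW1; exact zero_ne_one hW1)
  have hge : ∀ k, k ≤ nE (k + 1) := fun k => by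
    induction k with
    | zero => exact Nat.zero_le _
    | succ k ih => exact ih.trans_lt (hlt (k + 1) k.succ_pos)
  exact Set.infinite_of_forall_exists_gt fun a =>
    ⟨nE (a + 2), (hE (a + 1) a.succ_pos).1.2, (hge (a + 1)).trans_lt' a.lt_succ_self⟩

variable (hzeros : {n | x n = 0}.Infinite)
include hzeros

theorem zeroTime_strictMono : StrictMono (zeroTime x) := Nat.nth_strictMono hzeros

theorem zeroTime_mem (i : ℕ) : x (zeroTime x i) = 0 := Nat.nth_mem_of_infinite hzeros i

theorem isLeast_zeroTime_succ (i : ℕ) :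
    IsLeast {n | zeroTime x i + 1 ≤ n ∧ x n = 0} (zeroTime x (i + 1)) :=
  ⟨⟨zeroTime_strictMono hzeros i.lt_succ_self, zeroTime_mem hzeros _⟩, fun n ⟨hn, hn0⟩ =>
    not_lt.1 fun hlt => by have := Nat.le_nth_of_lt_nth_succ hlt hn0; unfold zeroTime at hn; omega⟩

theorem mem_blockSet_zeroTime_iff {n : ℕ} {A : ℕ → Set ℤ} :
    x ∈ blockSet n (zeroTime x n) A ↔ ∀ i < n, stepAfterZero x i ∈ A i :=
  ⟨fun hx => hx.2.2, fun hA => ⟨zeroTime_mem hzeros n, Nat.count_nth_of_infinite hzeros n, hA⟩⟩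

theorem count_zeros_zeroTime_add_two {i : ℕ} (hx : x (zeroTime x i + 1) ≠ 0) :
    Nat.count (fun n => x n = 0) (zeroTime x i + 2) = i + 1 := by
  rw [Nat.count_succ, if_neg hx, Nat.count_succ, if_pos (zeroTime_mem hzeros i),
    zeroTime, Nat.count_nth_of_infinite hzeros]

theorem exists_upCount_eq_of_isLeast_hit_one (hstep : ∀ n, |x (n + 1) - x n| ≤ 1) {j w : ℕ}
    (hw : IsLeast {n | zeroTime x j ≤ n ∧ x n = 1} w) :
    ∃ i, w = zeroTime x i + 1 ∧ stepAfterZero x i = 1 ∧ upCount x i = upCount x j := by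
  obtain ⟨i, rfl, hi⟩ := exists_zeroTime_of_isLeast_hit_one hstep (zeroTime_mem hzeros j) hw
  refine ⟨i, rfl, hi, ?_⟩
  have hji : j ≤ i := by
    have hne : zeroTime x j ≠ zeroTime x i + 1 := fun h => by
      have := hw.1.2
      rw [← h, zeroTime_mem hzeros] at this
      exact absurd this (by norm_num)
    exact (zeroTime_strictMono hzeros).le_iff_le.1 (by have := hw.1.1; omega)
  -- An up-step after a visit `τₖ` with `j ≤ k < i` would hit `1` before `w`.
  refine le_antisymm ?_ (Nat.count_monotone _ hji)
  by_contra! hlt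
  obtain ⟨k, hk, hk1⟩ := Nat.exists_of_count_lt_count hlt
  have hhit : x (zeroTime x k + 1) = 1 := by
    have := zeroTime_mem hzeros k
    simp only [stepAfterZero] at hk1
    omega
  have h1 := (zeroTime_strictMono hzeros).monotone hk.1
  have h2 := zeroTime_strictMono hzeros hk.2
  have := hw.2 ⟨by omega, hhit⟩
  omega

theorem exists_nW_eq_zeroTime_add_one (hx0 : x 0 = 0) (hstep : ∀ n, |x (n + 1) - x n| ≤ 1)
    {nE nW : ℕ → ℕ} (hE1 : nE 1 = 0)
    (hW : ∀ k, 1 ≤ k → IsLeast {n | nE k ≤ n ∧ x n = 1} (nW k))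
    (hE : ∀ k, 1 ≤ k → IsLeast {n | nW k ≤ n ∧ x n = 0} (nE (k + 1))) (k : ℕ) :
    ∃ i, nW (k + 1) = zeroTime x i + 1 ∧ stepAfterZero x i = 1 ∧ upCount x i = k := by
  induction k with
  | zero =>
    have h0 : zeroTime x 0 = nE 1 := by rw [hE1, zeroTime, Nat.nth_zero_of_zero hx0]
    obtain ⟨i, hi⟩ := exists_upCount_eq_of_isLeast_hit_one hzeros hstep (h0 ▸ hW 1 le_rfl)
    exact ⟨i, hi.1, hi.2.1, hi.2.2.trans (Nat.count_zero _)⟩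
  | succ k ih =>
    obtain ⟨i, hWi, hi1, hik⟩ := ih
    have hEi : zeroTime x (i + 1) = nE (k + 2) :=
      (isLeast_zeroTime_succ hzeros i).unique (hWi ▸ hE (k + 1) k.succ_pos)
    obtain ⟨i', hi'⟩ :=
      exists_upCount_eq_of_isLeast_hit_one hzeros hstep (hEi ▸ hW (k + 2) (by omega))
    refine ⟨i', hi'.1, hi'.2.1, ?_⟩
    rw [hi'.2.2, upCount, Nat.count_succ, if_pos hi1, ← upCount, hik]

theorem exists_upCount_deviation (hx0 : x 0 = 0) (hstep : ∀ n, |x (n + 1) - x n| ≤ 1)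
    {nE nW : ℕ → ℕ} (hE1 : nE 1 = 0)
    (hW : ∀ k, 1 ≤ k → IsLeast {n | nE k ≤ n ∧ x n = 1} (nW k))
    (hE : ∀ k, 1 ≤ k → IsLeast {n | nW k ≤ n ∧ x n = 0} (nE (k + 1)))
    {k M : ℕ} (hk : 1 ≤ k) (hkM : k ≤ M) {t : ℝ} (ht : 0 ≤ t)
    (h : t < |(k : ℝ) - 1 / 3 * Nat.count (fun n => x n = 0) (nW k + 1)|) :
    ∃ n ∈ Finset.Icc 1 (⌊3 * (M + t)⌋₊ + 1), t < |(upCount x n : ℝ) - n / 3| := by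
  obtain ⟨k, rfl⟩ := Nat.exists_eq_add_of_le' hk
  obtain ⟨i, hWi, hi1, hik⟩ := exists_nW_eq_zeroTime_add_one hzeros hx0 hstep hE1 hW hE k
  have hx1 : x (zeroTime x i + 1) ≠ 0 := by
    have := zeroTime_mem hzeros i
    simp only [stepAfterZero] at hi1
    omega
  have hup : upCount x (i + 1) = k + 1 := by
    rw [upCount, Nat.count_succ, if_pos hi1, ← upCount, hik]
  rw [hWi, count_zeros_zeroTime_add_two hzeros hx1, ← hup] at h
  refine exists_abs_sub_div_three_gt (U := upCount x) (m := i + 1) (Nat.count_monotone _)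
    (by omega) (by omega) ht ?_
  convert h using 3
  ring

end Path

section StepsAfterZero

variable {Ω : Type*} {X : Ω → ℕ → ℤ}

theorem preimage_blockSet_eq_preimage_increments (hX0 : ∀ ω, X ω 0 = 0) (n s : ℕ)
    (A : ℕ → Set ℤ) : ∃ T : Set (Finset.range s → ℤ), {ω | X ω ∈ blockSet n s A} =
      (fun ω (j : Finset.range s) => X ω (j + 1) - X ω j) ⁻¹' T := by
  refine ⟨_, (Set.subset_preimage_image _ _).antisymm ?_⟩
  rintro ω' ⟨ω, hω, heq⟩
  refine mem_blockSet_of_eqOn (eqOn_of_sub_eq ((hX0 ω).trans (hX0 ω').symm) fun j hj => ?_) hω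
  exact congrFun heq ⟨j, Finset.mem_range.2 hj⟩

variable [MeasurableSpace Ω] {P : Measure Ω} {μ : Measure ℤ}
  (hXmeas : ∀ n, Measurable fun ω => X ω n) (hX0 : ∀ ω, X ω 0 = 0)
include hXmeas hX0

theorem measurableSet_blockSet (n s : ℕ) (A : ℕ → Set ℤ) :
    MeasurableSet {ω | X ω ∈ blockSet n s A} := by
  obtain ⟨T, hT⟩ := preimage_blockSet_eq_preimage_increments hX0 n s A
  rw [hT]
  exact measurable_pi_lambda _ (fun j => (hXmeas _).sub (hXmeas _))
    (Set.to_countable T).measurableSet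

theorem measurable_zeroTime (i : ℕ) : Measurable fun ω => zeroTime (X ω) i := by
  have hset : ∀ s ≠ 0, {ω | zeroTime (X ω) i = s} = {ω | X ω ∈ blockSet i s fun _ => Set.univ} :=
    fun s hs => by ext ω; simp [blockSet, zeroTime_eq_iff hs]
  refine measurable_to_countable' fun s => ?_
  rcases eq_or_ne s 0 with rfl | hs
  · have : (fun ω => zeroTime (X ω) i) ⁻¹' {0} = (⋃ s ∈ ({0}ᶜ : Set ℕ),
        {ω | zeroTime (X ω) i = s})ᶜ := by
      ext ω
      simp only [Set.mem_preimage, Set.mem_singleton_iff, Set.mem_compl_iff, Set.mem_iUnion,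
        exists_prop, not_exists, not_and]
      exact ⟨fun h j hj h' => hj (h' ▸ h), fun h => not_not.1 fun h0 => h _ h0 rfl⟩
    rw [this]
    refine (MeasurableSet.biUnion (Set.to_countable _) fun s hs => ?_).compl
    exact hset s hs ▸ measurableSet_blockSet hXmeas hX0 i s _
  · change MeasurableSet {ω | zeroTime (X ω) i = s}
    exact hset s hs ▸ measurableSet_blockSet hXmeas hX0 i s _

theorem measurable_stepAfterZero (i : ℕ) : Measurable fun ω => stepAfterZero (X ω) i :=
  (measurable_from_prod_countable_left (f := fun p : Ω × ℕ => X p.1 (p.2 + 1) - X p.1 p.2)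
    fun s => (hXmeas (s + 1)).sub (hXmeas s)).comp
    (measurable_id.prodMk (measurable_zeroTime hXmeas hX0 i))

theorem measure_inter_eq_tsum_blockSet (hrec : ∀ᵐ ω ∂P, {n | X ω n = 0}.Infinite) (n : ℕ)
    (A : ℕ → Set ℤ) (W : ℕ → Set Ω) (hW : ∀ s, MeasurableSet (W s)) :
    P ({ω | ∀ i < n, stepAfterZero (X ω) i ∈ A i} ∩ {ω | ω ∈ W (zeroTime (X ω) n)}) =
      ∑' s, P ({ω | X ω ∈ blockSet n s A} ∩ W s) := by
  have hdisj : Pairwise (Function.onFun Disjoint fun s => {ω | X ω ∈ blockSet n s A} ∩ W s) :=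
    fun s s' hss' => Set.disjoint_left.2 fun ω hs hs' =>
      hss' ((zeroTime_of_mem_blockSet hs.1).symm.trans (zeroTime_of_mem_blockSet hs'.1))
  rw [← measure_iUnion hdisj fun s => (measurableSet_blockSet hXmeas hX0 n s A).inter (hW s)]
  refine measure_congr (hrec.mono fun ω hω => propext ⟨fun ⟨hA, hWω⟩ => ?_, fun hω' => ?_⟩)
  · exact Set.mem_iUnion.2 ⟨_, (mem_blockSet_zeroTime_iff hω).2 hA, hWω⟩
  · obtain ⟨s, hs, hWs⟩ := Set.mem_iUnion.1 hω'
    refine ⟨hs.2.2, ?_⟩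
    rwa [Set.mem_ofPred_eq, zeroTime_of_mem_blockSet hs]

variable (hXindep : iIndepFun (fun n ω => X ω (n + 1) - X ω n) P)
  (hXlaw : ∀ n, P.map (fun ω => X ω (n + 1) - X ω n) = μ)
include hXindep hXlaw

/-- The strong Markov property at the `(n+1)`-st visit to `0`, on the event that it happens at
time `s`. -/
theorem measure_blockSet_inter (n s : ℕ) (A : ℕ → Set ℤ) (B : Set ℤ) :
    P ({ω | X ω ∈ blockSet n s A} ∩ {ω | X ω (s + 1) - X ω s ∈ B}) =
      P {ω | X ω ∈ blockSet n s A} * μ B := by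
  obtain ⟨T, hT⟩ := preimage_blockSet_eq_preimage_increments hX0 n s A
  have hmeas : ∀ n, Measurable fun ω => X ω (n + 1) - X ω n := fun n => (hXmeas _).sub (hXmeas _)
  have hind : IndepFun (fun ω (j : Finset.range s) => X ω (j + 1) - X ω j)
      (fun ω => X ω (s + 1) - X ω s) P :=
    (hXindep.indepFun_finset _ {s} (by simp) hmeas).comp measurable_id
      (measurable_pi_apply ⟨s, Finset.mem_singleton_self s⟩)
  rw [hT, ← hXlaw s, Measure.map_apply (hmeas s) (Set.to_countable B).measurableSet]
  exact hind.measure_inter_preimage_eq_mul _ _ (Set.to_countable T).measurableSet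
    (Set.to_countable B).measurableSet

variable [IsProbabilityMeasure P] (hrec : ∀ᵐ ω ∂P, {n | X ω n = 0}.Infinite)
include hrec

theorem measure_forall_stepAfterZero_mem (n : ℕ) (A : ℕ → Set ℤ) :
    P {ω | ∀ i < n, stepAfterZero (X ω) i ∈ A i} = ∏ i ∈ Finset.range n, μ (A i) := by
  induction n with
  | zero => simp
  | succ n ih =>
    have hall := measure_inter_eq_tsum_blockSet hXmeas hX0 hrec n A (fun _ => Set.univ)
      fun _ => MeasurableSet.univ
    have hnext := measure_inter_eq_tsum_blockSet hXmeas hX0 hrec n A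
      (fun s => {ω | X ω (s + 1) - X ω s ∈ A n})
      fun s => ((hXmeas _).sub (hXmeas _)) (Set.to_countable (A n)).measurableSet
    simp only [Set.mem_univ, Set.ofPred_true, Set.inter_univ] at hall
    simp only [Nat.forall_lt_succ_right, Set.ofPred_and]
    rw [Finset.prod_range_succ, ← ih, hall, ← ENNReal.tsum_mul_right]
    simp_rw [← measure_blockSet_inter hXmeas hX0 hXindep hXlaw]
    exact hnext

theorem measure_forall_mem_finset_stepAfterZero_mem (S : Finset ℕ) (A : ℕ → Set ℤ) :
    P {ω | ∀ i ∈ S, stepAfterZero (X ω) i ∈ A i} = ∏ i ∈ S, μ (A i) := by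
  classical
  have : IsProbabilityMeasure μ :=
    hXlaw 0 ▸ Measure.isProbabilityMeasure_map ((hXmeas _).sub (hXmeas _)).aemeasurable
  obtain ⟨n, hS⟩ := S.exists_nat_subset_range
  have hset : {ω | ∀ i ∈ S, stepAfterZero (X ω) i ∈ A i} =
      {ω | ∀ i < n, stepAfterZero (X ω) i ∈ if i ∈ S then A i else Set.univ} := by
    ext ω
    refine ⟨fun h i _ => ?_, fun h i hi => by simpa [hi] using h i (Finset.mem_range.1 (hS hi))⟩
    split_ifs with hi
    exacts [h i hi, Set.mem_univ _]
  rw [hset, measure_forall_stepAfterZero_mem hXmeas hX0 hXindep hXlaw hrec]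
  simp_rw [apply_ite μ, measure_univ]
  rw [Finset.prod_ite_mem, Finset.inter_eq_right.2 hS]

theorem measure_stepAfterZero_mem (i : ℕ) (B : Set ℤ) :
    P {ω | stepAfterZero (X ω) i ∈ B} = μ B := by
  simpa using measure_forall_mem_finset_stepAfterZero_mem hXmeas hX0 hXindep hXlaw hrec {i}
    fun _ => B

theorem iIndepFun_stepAfterZero : iIndepFun (fun i ω => stepAfterZero (X ω) i) P := by
  refine iIndepFun_iff_measure_inter_preimage_eq_mul.2 fun S sets _ => ?_
  simp_rw [Set.preimage, measure_stepAfterZero_mem hXmeas hX0 hXindep hXlaw hrec]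
  convert measure_forall_mem_finset_stepAfterZero_mem hXmeas hX0 hXindep hXlaw hrec S sets
  ext ω
  simp

theorem measureReal_le_abs_upCount_sub_le (n : ℕ) {ε : ℝ} (hε : 0 ≤ ε) :
    P.real {ω | ε ≤ |(upCount (X ω) n : ℝ) - n * μ.real {1}|} ≤
      2 * Real.exp (-(2 * ε ^ 2 / n)) := by
  have hS := measurable_stepAfterZero hXmeas hX0
  have hS1 : ∀ i, MeasurableSet {ω | stepAfterZero (X ω) i = 1} :=
    fun i => hS i (measurableSet_singleton 1)
  set Y : ℕ → Ω → ℝ := fun i ω => if stepAfterZero (X ω) i = 1 then 1 else 0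
  have hY : ∀ i, Y i = {ω | stepAfterZero (X ω) i = 1}.indicator 1 := fun i => by
    ext ω
    simp [Y, Set.indicator_apply]
  have hmean : ∀ i, P[Y i] = μ.real {1} := fun i => by
    rw [hY, integral_indicator_one (hS1 i), measureReal_def,
      measureReal_def, ← measure_stepAfterZero_mem hXmeas hX0 hXindep hXlaw hrec i]
    rfl
  have hsum : ∀ ω, ∑ i ∈ Finset.range n, (Y i ω - P[Y i]) =
      (upCount (X ω) n : ℝ) - n * μ.real {1} := fun ω => by
    simp only [hmean, Finset.sum_sub_distrib, Finset.sum_const, Finset.card_range, nsmul_eq_mul,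
      upCount, Nat.count_eq_card_filter_range, Finset.natCast_card_filter, Y]
  have hind : iIndepFun Y P :=
    (iIndepFun_stepAfterZero hXmeas hX0 hXindep hXlaw hrec).comp
      (fun _ z => if z = 1 then (1 : ℝ) else 0) fun _ => measurable_of_countable _
  simpa only [hsum] using measureReal_le_abs_sum_sub_integral_le hind
    (fun i => (hY i ▸ (measurable_one.indicator (hS1 i))).aemeasurable)
    (fun i ω => by by_cases h : stepAfterZero (X ω) i = 1 <;> simp [Y, h]) n hε

end StepsAfterZero

section Deviation

variable {Ω : Type*} [MeasurableSpace Ω] {P : Measure Ω} {X : Ω → ℕ → ℤ} {μ : Measure ℤ}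

theorem ae_abs_sub_le_one (hXmeas : ∀ n, Measurable fun ω => X ω n)
    (hXlaw : ∀ n, P.map (fun ω => X ω (n + 1) - X ω n) = μ) (hμ : μ {z | 1 < |z|} = 0) :
    ∀ᵐ ω ∂P, ∀ n, |X ω (n + 1) - X ω n| ≤ 1 := by
  refine ae_all_iff.2 fun n => ae_iff.2 ?_
  have hm : Measurable fun ω => X ω (n + 1) - X ω n := (hXmeas _).sub (hXmeas _)
  simp_rw [not_le]
  rwa [← hXlaw n, Measure.map_apply hm (Set.to_countable _).measurableSet] at hμ

theorem measureReal_exists_deviation_le [IsProbabilityMeasure P]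
    (hXmeas : ∀ n, Measurable fun ω => X ω n) (hX0 : ∀ ω, X ω 0 = 0)
    (hXindep : iIndepFun (fun n ω => X ω (n + 1) - X ω n) P)
    (hXlaw : ∀ n, P.map (fun ω => X ω (n + 1) - X ω n) = μ) (hμ1 : μ.real {1} = 1 / 3)
    (hstep : ∀ᵐ ω ∂P, ∀ n, |X ω (n + 1) - X ω n| ≤ 1) {NE NW : Ω → ℕ → ℕ}
    (hN : ∀ᵐ ω ∂P, NE ω 1 = 0 ∧ ∀ k, 1 ≤ k →
      IsLeast {n : ℕ | NE ω k ≤ n ∧ X ω n = 1} (NW ω k) ∧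
      IsLeast {n : ℕ | NW ω k ≤ n ∧ X ω n = 0} (NE ω (k + 1)))
    {M : ℕ} (hM : 1 ≤ M) {t : ℝ} (ht : 0 ≤ t) (htM : t ≤ M) :
    P.real {ω | ∃ k, 1 ≤ k ∧ k ≤ M ∧
        t < |(k : ℝ) - 1 / 3 * Nat.count (fun n => X ω n = 0) (NW ω k + 1)|} ≤
      14 * M * Real.exp (-(2 * t ^ 2 / (7 * M))) := by
  set N := ⌊3 * (M + t)⌋₊ + 1
  have hM' : (1 : ℝ) ≤ M := by exact_mod_cast hM
  have hN7 : (N : ℝ) ≤ 7 * M := by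
    have := Nat.floor_le (show 0 ≤ 3 * (M + t) by positivity)
    push_cast [N]
    linarith
  have hrec : ∀ᵐ ω ∂P, {n | X ω n = 0}.Infinite := hN.mono fun ω hω =>
    infinite_zeros_of_isLeast (fun k hk => (hω.2 k hk).1) (fun k hk => (hω.2 k hk).2)
  have hsub : {ω | ∃ k, 1 ≤ k ∧ k ≤ M ∧
        t < |(k : ℝ) - 1 / 3 * Nat.count (fun n => X ω n = 0) (NW ω k + 1)|} ≤ᵐ[P]
      ⋃ n ∈ Finset.Icc 1 N, {ω | t ≤ |(upCount (X ω) n : ℝ) - n * μ.real {1}|} := by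
    filter_upwards [hrec, hstep, hN] with ω hzeros hstepω hNω ⟨k, hk, hkM, hdev⟩
    obtain ⟨n, hn, hdev'⟩ := exists_upCount_deviation hzeros (hX0 ω) hstepω hNω.1
      (fun k hk => (hNω.2 k hk).1) (fun k hk => (hNω.2 k hk).2) hk hkM ht hdev
    refine Set.mem_biUnion hn ?_
    rw [Set.mem_ofPred_eq, hμ1, ← div_eq_mul_one_div]
    exact hdev'.le
  calc _ ≤ P.real (⋃ n ∈ Finset.Icc 1 N,
          {ω | t ≤ |(upCount (X ω) n : ℝ) - n * μ.real {1}|}) :=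
        ENNReal.toReal_mono (measure_ne_top _ _) (measure_mono_ae hsub)
    _ ≤ ∑ n ∈ Finset.Icc 1 N, 2 * Real.exp (-(2 * t ^ 2 / (7 * M))) := by
        refine (measureReal_biUnion_finset_le _ _).trans (Finset.sum_le_sum fun n hn => ?_)
        refine (measureReal_le_abs_upCount_sub_le hXmeas hX0 hXindep hXlaw hrec n ht).trans ?_
        have hn' := Finset.mem_Icc.1 hn
        have h1 : (1 : ℝ) ≤ n := by exact_mod_cast hn'.1
        have h2 : (n : ℝ) ≤ N := by exact_mod_cast hn'.2
        gcongr
        linarith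
    _ ≤ 14 * M * Real.exp (-(2 * t ^ 2 / (7 * M))) := by
        rw [Finset.sum_const, Nat.card_Icc, nsmul_eq_mul, Nat.add_sub_cancel]
        nlinarith [Real.exp_pos (-(2 * t ^ 2 / (7 * M)))]

end Deviation

end ZeroVisits

/-- Let `(X_n)_{n≥0}` be a random walk with `X_0 = 0` and i.i.d. increments,
each uniform on `{−1, 0, 1}`.  Set `N_1^E = 0` and inductively let `N_k^W` be the least
`n ≥ N_k^E` with `X_n = 1` and `N_{k+1}^E` the least `n ≥ N_k^W` with `X_n = 0` (these are
a.s. well defined).  Let `𝔩_n = #{0 ≤ k ≤ n : X_k = 0}`.  Then for every `ε > 0` and every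
`p > 0`, `M^p · P[max_{1 ≤ k ≤ M} |k − (1/3)·𝔩_{N_k^W}| > M^(1/2+ε)] → 0` as `M → ∞`. -/
theorem stmt_3
    {Ω : Type*} [MeasurableSpace Ω] (P : Measure Ω) [IsProbabilityMeasure P]
    (X : Ω → ℕ → ℤ)
    (hXmeas : ∀ n, Measurable (fun ω => X ω n))
    (hX0 : ∀ ω, X ω 0 = 0)
    (hXindep : iIndepFun (fun n ω => X ω (n + 1) - X ω n) P)
    (hXlaw : ∀ n : ℕ, Measure.map (fun ω => X ω (n + 1) - X ω n) P
      = (3 : ℝ≥0∞)⁻¹ • (Measure.dirac (-1 : ℤ) + Measure.dirac (0 : ℤ)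
          + Measure.dirac (1 : ℤ)))
    (NE NW : Ω → ℕ → ℕ)
    (hN : ∀ᵐ ω ∂P, NE ω 1 = 0 ∧ ∀ k, 1 ≤ k →
      IsLeast {n : ℕ | NE ω k ≤ n ∧ X ω n = 1} (NW ω k) ∧
      IsLeast {n : ℕ | NW ω k ≤ n ∧ X ω n = 0} (NE ω (k + 1)))
    (l : Ω → ℕ → ℕ)
    (hl : ∀ ω n, l ω n = ((Finset.range (n + 1)).filter (fun k => X ω k = 0)).card) :
    ∀ ε > (0 : ℝ), ∀ p > (0 : ℝ),
      Tendsto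
        (fun M : ℕ => (M : ℝ) ^ p *
          (P {ω | ∃ k, 1 ≤ k ∧ k ≤ M ∧
              |(k : ℝ) - (1 / 3) * (l ω (NW ω k) : ℝ)| > (M : ℝ) ^ ((1 : ℝ) / 2 + ε)}).toReal)
        atTop (𝓝 0) := by
  intro ε hε p _
  simp_rw [hl, ← Nat.count_eq_card_filter_range, gt_iff_lt]
  -- The event shrinks as `ε` grows, and `ε ≤ 1/2` keeps the threshold below `M`.
  set ε' := min ε (1 / 2)
  have hε' : 0 < ε' := lt_min hε (by norm_num)
  have hstep := ZeroVisits.ae_abs_sub_le_one hXmeas hXlaw (by simp)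
  have hμ1 : ((3 : ℝ≥0∞)⁻¹ • (Measure.dirac (-1 : ℤ) + Measure.dirac (0 : ℤ)
      + Measure.dirac (1 : ℤ))).real {1} = 1 / 3 := by
    simp [measureReal_def, ENNReal.toReal_inv]
  have hlim := (tendsto_natCast_rpow_mul_exp_neg_rpow (q := p + 1) (c := 2 / 7) (by norm_num)
    (mul_pos two_pos hε')).const_mul 14
  rw [mul_zero] at hlim
  refine squeeze_zero' (Eventually.of_forall fun M => by positivity) ?_ hlim
  filter_upwards [eventually_ge_atTop 1] with M hM
  have hM' : (1 : ℝ) ≤ M := by exact_mod_cast hM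
  have hε'ε : (M : ℝ) ^ (1 / 2 + ε') ≤ M ^ (1 / 2 + ε) :=
    Real.rpow_le_rpow_of_exponent_le hM' (by linarith [min_le_left ε (1 / 2)])
  have htM : (M : ℝ) ^ (1 / 2 + ε') ≤ M :=
    Real.rpow_le_self_of_one_le hM' (by linarith [min_le_right ε (1 / 2)])
  have hbound := ZeroVisits.measureReal_exists_deviation_le hXmeas hX0 hXindep hXlaw hμ1 hstep hN
    hM (by positivity) htM
  rw [Real.rpow_one_half_add_sq (by positivity)] at hbound
  calc (M : ℝ) ^ p * P.real _
      ≤ (M : ℝ) ^ p * (14 * M * Real.exp (-(2 * (M * M ^ (2 * ε')) / (7 * M)))) := by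
        gcongr
        refine (measureReal_mono ?_).trans hbound
        exact fun ω ⟨k, hk, hkM, h⟩ => ⟨k, hk, hkM, hε'ε.trans_lt h⟩
    _ = 14 * ((M : ℝ) ^ (p + 1) * Real.exp (-(2 / 7 * (M : ℝ) ^ (2 * ε')))) := by
        rw [Real.rpow_add_one (by positivity)]
        field_simp
end

section
/- Let T > 0, γ ∈ (0, 1], C ≥ 0, and let f : [0, T] → ℝ satisfy |f(t) − f(s)| ≤ C·|t − s|^γ for all s, t ∈ [0, T]. Let A ⊆ [0, T] and suppose that f is constant on every interval that is contained in [0, T] \ A. Suppose there exist constants c ≥ 0 and β < 2γ such that for every k ∈ ℕ the number of indices j ∈ {1, …, 2^k} with [t_{j−1}^k, t_j^k] ∩ A ≠ ∅ is at most c·2^{βk}. Then ∑_{j=1}^{2^k} ( f(t_j^k) − f(t_{j−1}^k) )² → 0 as k → ∞. -/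
open Filter Topology

/-- Let `T > 0`, `γ ∈ (0,1]`, `C ≥ 0`, and let `f : [0,T] → ℝ` be
`γ`-Hölder with constant `C`.  Let `A ⊆ [0,T]` and suppose `f` is constant on every interval
contained in `[0,T] \ A`.  Suppose there are constants `c ≥ 0` and `β < 2γ` such that for
every `k` the number of indices `j ∈ {1, …, 2^k}` with `[t_{j−1}^k, t_j^k] ∩ A ≠ ∅` is at
most `c·2^(βk)`, where `t_j^k = j·2^(−k)·T`.  Then
`∑_{j=1}^{2^k} (f(t_j^k) − f(t_{j−1}^k))² → 0` as `k → ∞`. -/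
theorem stmt_5
    (T : ℝ) (hT : 0 < T) (γ : ℝ) (hγ : γ ∈ Set.Ioc (0 : ℝ) 1) (C : ℝ) (hC : 0 ≤ C)
    (f : ℝ → ℝ)
    (hHolder : ∀ s ∈ Set.Icc 0 T, ∀ t ∈ Set.Icc 0 T, |f t - f s| ≤ C * |t - s| ^ γ)
    (A : Set ℝ) (hA : A ⊆ Set.Icc 0 T)
    (hconst : ∀ I : Set ℝ, I.OrdConnected → I ⊆ Set.Icc 0 T \ A →
      ∀ x ∈ I, ∀ y ∈ I, f x = f y)
    (c : ℝ) (hc : 0 ≤ c) (β : ℝ) (hβ : β < 2 * γ)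
    (hcount : ∀ k : ℕ,
      ({j : ℕ | 1 ≤ j ∧ j ≤ 2 ^ k ∧
          (Set.Icc (((j : ℝ) - 1) * 2 ^ (-(k : ℝ)) * T) ((j : ℝ) * 2 ^ (-(k : ℝ)) * T)
            ∩ A).Nonempty}.ncard : ℝ) ≤ c * 2 ^ (β * k)) :
    Tendsto
      (fun k : ℕ => ∑ j ∈ Finset.Icc 1 (2 ^ k : ℕ),
        (f ((j : ℝ) * 2 ^ (-(k : ℝ)) * T) - f (((j : ℝ) - 1) * 2 ^ (-(k : ℝ)) * T)) ^ 2)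
      atTop (𝓝 0) := by
  classical
  obtain ⟨hγ0, hγ1⟩ := hγ
  have hT0 : (0:ℝ) ≤ T := hT.le
  set g : ℕ → ℝ := fun k => (c * (C ^ 2 * T ^ (2 * γ))) * ((2:ℝ) ^ (β - 2 * γ)) ^ k with hg
  have key : ∀ k : ℕ, ∑ j ∈ Finset.Icc 1 (2 ^ k : ℕ),
      (f ((j : ℝ) * 2 ^ (-(k : ℝ)) * T) - f (((j : ℝ) - 1) * 2 ^ (-(k : ℝ)) * T)) ^ 2 ≤ g k := by
    intro k
    set e : ℝ := (2:ℝ) ^ (-(k:ℝ)) with he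
    have he0 : (0:ℝ) < e := Real.rpow_pos_of_pos two_pos _
    have hek : e * 2 ^ k = 1 := by
      rw [he, ← Real.rpow_natCast 2 k, ← Real.rpow_add two_pos]
      norm_num
    have hmem : ∀ x : ℝ, 0 ≤ x → x ≤ (2:ℝ) ^ k → x * e * T ∈ Set.Icc (0:ℝ) T := by
      intro x hx0 hx1
      constructor
      · positivity
      · nlinarith [mul_pos he0 hT]
    set M : ℝ := C ^ 2 * (e * T) ^ (2 * γ) with hM
    have hM0 : 0 ≤ M := by positivity
    set p : ℕ → Prop := fun j =>
      (Set.Icc (((j : ℝ) - 1) * e * T) ((j : ℝ) * e * T) ∩ A).Nonempty with hp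
    set B : Finset ℕ := (Finset.Icc 1 (2 ^ k)).filter p with hB
    -- bound for each term
    have hbound : ∀ j ∈ Finset.Icc 1 (2 ^ k : ℕ),
        (f ((j : ℝ) * e * T) - f (((j : ℝ) - 1) * e * T)) ^ 2 ≤ M := by
      intro j hj
      rw [Finset.mem_Icc] at hj
      have hj1 : (1:ℝ) ≤ (j:ℝ) := by exact_mod_cast hj.1
      have hj2 : (j:ℝ) ≤ 2 ^ k := by exact_mod_cast hj.2
      have ha := hmem ((j:ℝ) - 1) (by linarith) (by linarith)
      have hb := hmem (j:ℝ) (by linarith) hj2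
      have h1 := hHolder _ ha _ hb
      have hdiff : (j:ℝ) * e * T - ((j:ℝ) - 1) * e * T = e * T := by ring
      rw [hdiff, abs_of_nonneg (by positivity : (0:ℝ) ≤ e * T)] at h1
      calc (f ((j : ℝ) * e * T) - f (((j : ℝ) - 1) * e * T)) ^ 2
          = |f ((j : ℝ) * e * T) - f (((j : ℝ) - 1) * e * T)| ^ 2 := (sq_abs _).symm
        _ ≤ (C * (e * T) ^ γ) ^ 2 := pow_le_pow_left₀ (abs_nonneg _) h1 2
        _ = M := by
            rw [hM, mul_pow, ← Real.rpow_natCast ((e*T) ^ γ) 2,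
              ← Real.rpow_mul (by positivity : (0:ℝ) ≤ e * T)]
            norm_num [mul_comm]
    -- terms with empty intersection vanish
    have hzero : ∀ j ∈ (Finset.Icc 1 (2 ^ k)).filter (fun j => ¬ p j),
        (f ((j : ℝ) * e * T) - f (((j : ℝ) - 1) * e * T)) ^ 2 = 0 := by
      intro j hj
      rw [Finset.mem_filter, Finset.mem_Icc] at hj
      obtain ⟨⟨hj1n, hj2n⟩, hnp⟩ := hj
      have hj1 : (1:ℝ) ≤ (j:ℝ) := by exact_mod_cast hj1n
      have hj2 : (j:ℝ) ≤ 2 ^ k := by exact_mod_cast hj2n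
      have ha := hmem ((j:ℝ) - 1) (by linarith) (by linarith)
      have hb := hmem (j:ℝ) (by linarith) hj2
      have hab : ((j:ℝ) - 1) * e * T ≤ (j:ℝ) * e * T := by nlinarith [mul_pos he0 hT]
      have hsub : Set.Icc (((j:ℝ) - 1) * e * T) ((j:ℝ) * e * T) ⊆ Set.Icc 0 T \ A := by
        intro x hx
        exact ⟨⟨ha.1.trans hx.1, hx.2.trans hb.2⟩, fun hxA => hnp ⟨x, hx, hxA⟩⟩
      have := hconst _ Set.ordConnected_Icc hsub ((j:ℝ) * e * T) ⟨hab, le_refl _⟩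
        (((j:ℝ) - 1) * e * T) ⟨le_refl _, hab⟩
      rw [this, sub_self]
      ring
    have hsplit := Finset.sum_filter_add_sum_filter_not (Finset.Icc 1 (2 ^ k)) p
      (fun j => (f ((j : ℝ) * e * T) - f (((j : ℝ) - 1) * e * T)) ^ 2)
    have hcard : (B.card : ℝ) ≤ c * 2 ^ (β * k) := by
      have hSet : (↑B : Set ℕ) = {j : ℕ | 1 ≤ j ∧ j ≤ 2 ^ k ∧ p j} := by
        ext j
        simp [hB, Finset.mem_filter, Finset.mem_Icc, and_assoc]
      have := hcount k
      rw [← hSet, Set.ncard_coe_finset] at this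
      exact this
    have hsum1 : ∑ j ∈ B, (f ((j : ℝ) * e * T) - f (((j : ℝ) - 1) * e * T)) ^ 2
        ≤ (B.card : ℝ) * M := by
      have := Finset.sum_le_card_nsmul B
        (fun j => (f ((j : ℝ) * e * T) - f (((j : ℝ) - 1) * e * T)) ^ 2) M
        (fun j hj => hbound j (Finset.mem_filter.mp hj).1)
      simpa [nsmul_eq_mul] using this
    have hsum2 : ∑ j ∈ (Finset.Icc 1 (2 ^ k)).filter (fun j => ¬ p j),
        (f ((j : ℝ) * e * T) - f (((j : ℝ) - 1) * e * T)) ^ 2 = 0 :=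
      Finset.sum_eq_zero hzero
    have heq : c * 2 ^ (β * k) * M = g k := by
      rw [hM, hg, he]
      have h1 : ((2:ℝ) ^ (-(k:ℝ)) * T) ^ (2 * γ)
          = (2:ℝ) ^ ((-(k:ℝ)) * (2 * γ)) * T ^ (2 * γ) := by
        rw [Real.mul_rpow (by positivity) hT0,
          ← Real.rpow_mul (by norm_num : (0:ℝ) ≤ 2)]
      rw [h1]
      have h2 : (2:ℝ) ^ (β * k) * (2:ℝ) ^ ((-(k:ℝ)) * (2 * γ)) = ((2:ℝ) ^ (β - 2 * γ)) ^ k := by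
        rw [← Real.rpow_add two_pos, ← Real.rpow_natCast ((2:ℝ) ^ (β - 2*γ)) k,
          ← Real.rpow_mul (by norm_num : (0:ℝ) ≤ 2)]
        congr 1
        ring
      calc c * 2 ^ (β * k) * (C ^ 2 * ((2:ℝ) ^ ((-(k:ℝ)) * (2 * γ)) * T ^ (2 * γ)))
          = c * (C ^ 2 * T ^ (2 * γ)) * ((2:ℝ) ^ (β * k) * (2:ℝ) ^ ((-(k:ℝ)) * (2 * γ))) := by
            ring
        _ = c * (C ^ 2 * T ^ (2 * γ)) * ((2:ℝ) ^ (β - 2 * γ)) ^ k := by rw [h2]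
    rw [← hsplit, hsum2, add_zero]
    exact hsum1.trans ((mul_le_mul_of_nonneg_right hcard hM0).trans_eq heq)
  have hnn : ∀ k : ℕ, 0 ≤ ∑ j ∈ Finset.Icc 1 (2 ^ k : ℕ),
      (f ((j : ℝ) * 2 ^ (-(k : ℝ)) * T) - f (((j : ℝ) - 1) * 2 ^ (-(k : ℝ)) * T)) ^ 2 :=
    fun k => Finset.sum_nonneg fun j _ => sq_nonneg _
  have hr0 : (0:ℝ) ≤ (2:ℝ) ^ (β - 2 * γ) := Real.rpow_nonneg (by norm_num) _
  have hr1 : (2:ℝ) ^ (β - 2 * γ) < 1 :=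
    Real.rpow_lt_one_of_one_lt_of_neg one_lt_two (by linarith)
  have hg0 : Tendsto g atTop (𝓝 0) := by
    have := (tendsto_pow_atTop_nhds_zero_of_lt_one hr0 hr1).const_mul
      (c * (C ^ 2 * T ^ (2 * γ)))
    simpa [hg] using this
  exact squeeze_zero hnn key hg0
end

section
/- Let f and f_k (k ∈ ℕ) be continuous functions [0, ∞) → ℝ with f_k → f uniformly on compact sets. Fix s > 0 with f(s) > 0, set τ̃ = τ̃(f, s) and τ = τ(f, s), and assume: both τ̃ and τ exist, τ̃ > 0, and for every ε > 0 there exist u ∈ (τ̃ − ε, τ̃) and v ∈ (τ, τ + ε) with f(u) < 0 and f(v) < 0. Then for all sufficiently large k the times τ̃_k := τ̃(f_k, s) and τ_k := τ(f_k, s) are well defined, and τ̃_k → τ̃ and τ_k → τ as k → ∞. -/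
open Filter Topology

/-- Let `f` and `f_k` be continuous functions `[0, ∞) → ℝ` with `f_k → f`
uniformly on compact sets.  Fix `s > 0` with `f(s) > 0`, set
`τ̃ = sup{t ∈ [0, s] : f(t) ≤ 0}` and `τ = inf{t ≥ s : f(t) ≤ 0}`, and assume: both exist
(the defining sets are nonempty), `τ̃ > 0`, and for every `ε > 0` there are
`u ∈ (τ̃ − ε, τ̃)` and `v ∈ (τ, τ + ε)` with `f(u) < 0` and `f(v) < 0`.  Then for all
sufficiently large `k` the times `τ̃_k = τ̃(f_k, s)` and `τ_k = τ(f_k, s)` are well defined,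
and `τ̃_k → τ̃`, `τ_k → τ` as `k → ∞`. -/
theorem stmt_7
    (f : ℝ → ℝ) (fk : ℕ → ℝ → ℝ)
    (hf : ContinuousOn f (Set.Ici 0))
    (hfk : ∀ k, ContinuousOn (fk k) (Set.Ici 0))
    (hconv : ∀ K : Set ℝ, IsCompact K → K ⊆ Set.Ici 0 → TendstoUniformlyOn fk f atTop K)
    (s : ℝ) (hs : 0 < s) (hfs : 0 < f s)
    (τ' τ : ℝ)
    (hτ'def : τ' = sSup {t : ℝ | t ∈ Set.Icc 0 s ∧ f t ≤ 0})
    (hτdef : τ = sInf {t : ℝ | s ≤ t ∧ f t ≤ 0})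
    (hne1 : {t : ℝ | t ∈ Set.Icc 0 s ∧ f t ≤ 0}.Nonempty)
    (hne2 : {t : ℝ | s ≤ t ∧ f t ≤ 0}.Nonempty)
    (hτ'pos : 0 < τ')
    (happrox : ∀ ε > (0 : ℝ),
      (∃ u ∈ Set.Ioo (τ' - ε) τ', f u < 0) ∧ (∃ v ∈ Set.Ioo τ (τ + ε), f v < 0)) :
    -- for all sufficiently large `k`, `τ̃_k` and `τ_k` are well defined,
    (∀ᶠ k in atTop,
      {t : ℝ | t ∈ Set.Icc 0 s ∧ fk k t ≤ 0}.Nonempty ∧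
      {t : ℝ | s ≤ t ∧ fk k t ≤ 0}.Nonempty)
    -- and `τ̃_k → τ̃` and `τ_k → τ`
    ∧ Tendsto (fun k => sSup {t : ℝ | t ∈ Set.Icc 0 s ∧ fk k t ≤ 0}) atTop (𝓝 τ')
    ∧ Tendsto (fun k => sInf {t : ℝ | s ≤ t ∧ fk k t ≤ 0}) atTop (𝓝 τ) := by
  -- pointwise convergence
  have hpt : ∀ x : ℝ, 0 ≤ x → Tendsto (fun k => fk k x) atTop (𝓝 (f x)) := by
    intro x hx
    exact (hconv {x} isCompact_singleton (by simpa using hx)).tendsto_at rfl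
  -- basic facts about τ'
  have hbddA0 : BddAbove {t : ℝ | t ∈ Set.Icc 0 s ∧ f t ≤ 0} := ⟨s, fun t ht => ht.1.2⟩
  have hτ'le : τ' ≤ s := hτ'def ▸ csSup_le hne1 (fun t ht => ht.1.2)
  have hA0closed : IsClosed {t : ℝ | t ∈ Set.Icc 0 s ∧ f t ≤ 0} := by
    have : {t : ℝ | t ∈ Set.Icc 0 s ∧ f t ≤ 0} = Set.Icc 0 s ∩ f ⁻¹' Set.Iic 0 := by
      ext t; simp [Set.mem_Icc, and_assoc]
    rw [this]
    exact (hf.mono Set.Icc_subset_Ici_self).preimage_isClosed_of_isClosed isClosed_Icc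
      isClosed_Iic
  have hτ'mem : τ' ∈ {t : ℝ | t ∈ Set.Icc 0 s ∧ f t ≤ 0} :=
    hτ'def ▸ hA0closed.csSup_mem hne1 hbddA0
  have hτ'lt : τ' < s := lt_of_le_of_ne hτ'le (by
    intro h; rw [h] at hτ'mem; exact absurd hτ'mem.2 (not_le.2 hfs))
  -- basic facts about τ
  have hbddB0 : BddBelow {t : ℝ | s ≤ t ∧ f t ≤ 0} := ⟨s, fun t ht => ht.1⟩
  have hτge : s ≤ τ := hτdef ▸ le_csInf hne2 (fun t ht => ht.1)
  have hB0closed : IsClosed {t : ℝ | s ≤ t ∧ f t ≤ 0} := by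
    have : {t : ℝ | s ≤ t ∧ f t ≤ 0} = Set.Ici s ∩ f ⁻¹' Set.Iic 0 := rfl
    rw [this]
    exact (hf.mono fun x hx => le_trans hs.le hx).preimage_isClosed_of_isClosed isClosed_Ici
      isClosed_Iic
  have hτmem : τ ∈ {t : ℝ | s ≤ t ∧ f t ≤ 0} := hτdef ▸ hB0closed.csInf_mem hne2 hbddB0
  have hτgt : s < τ := lt_of_le_of_ne hτge (by
    intro h; rw [← h] at hτmem; exact absurd hτmem.2 (not_le.2 hfs))
  -- positivity of f between the hitting times
  have fpos1 : ∀ t ∈ Set.Ioc τ' s, 0 < f t := by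
    intro t ht
    by_contra h
    have : t ∈ {t : ℝ | t ∈ Set.Icc 0 s ∧ f t ≤ 0} :=
      ⟨⟨le_trans hτ'pos.le ht.1.le, ht.2⟩, not_lt.1 h⟩
    exact absurd (hτ'def ▸ le_csSup hbddA0 this) (not_le.2 ht.1)
  have fpos2 : ∀ t ∈ Set.Ico s τ, 0 < f t := by
    intro t ht
    by_contra h
    have : t ∈ {t : ℝ | s ≤ t ∧ f t ≤ 0} := ⟨ht.1, not_lt.1 h⟩
    exact absurd (hτdef ▸ csInf_le hbddB0 this) (not_le.2 ht.2)
  -- eventual nonemptiness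
  obtain ⟨⟨u₀, hu₀, hfu₀⟩, ⟨v₀, hv₀, hfv₀⟩⟩ := happrox τ' hτ'pos
  have hu₀pos : 0 < u₀ := by have := hu₀.1; linarith
  have hv₀gt : s < v₀ := lt_trans hτgt hv₀.1
  have evu₀ : ∀ᶠ k in atTop, fk k u₀ < 0 := (hpt u₀ hu₀pos.le).eventually_lt_const hfu₀
  have evv₀ : ∀ᶠ k in atTop, fk k v₀ < 0 := (hpt v₀ (by linarith : (0:ℝ) ≤ v₀)).eventually_lt_const hfv₀
  refine ⟨?_, ?_, ?_⟩
  · filter_upwards [evu₀, evv₀] with k hku hkv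
    exact ⟨⟨u₀, ⟨hu₀pos.le, le_trans hu₀.2.le (le_trans hτ'le le_rfl)⟩, hku.le⟩,
      ⟨v₀, hv₀gt.le, hkv.le⟩⟩
  · -- convergence of the sups
    rw [Metric.tendsto_nhds]
    intro ε hε
    set ε' : ℝ := min (ε/2) (min (τ'/2) ((s - τ')/2)) with hε'def
    have hε'pos : 0 < ε' := by
      apply lt_min (by linarith) (lt_min (by linarith) (by linarith))
    have hε'₁ : ε' ≤ ε/2 := min_le_left _ _
    have hε'₂ : ε' ≤ τ'/2 := le_trans (min_le_right _ _) (min_le_left _ _)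
    have hε'₃ : ε' ≤ (s - τ')/2 := le_trans (min_le_right _ _) (min_le_right _ _)
    obtain ⟨⟨u, hu, hfu⟩, -⟩ := happrox ε' hε'pos
    have hupos : 0 < u := by have := hu.1; linarith
    -- the compact interval where f is strictly positive
    have hKne : (Set.Icc (τ' + ε') s).Nonempty := ⟨s, by constructor <;> linarith⟩
    have hKsub : Set.Icc (τ' + ε') s ⊆ Set.Ioc τ' s := fun x hx =>
      ⟨by linarith [hx.1], hx.2⟩
    have hKsub0 : Set.Icc (τ' + ε') s ⊆ Set.Ici 0 := fun x hx => by
      have := hx.1; simp only [Set.mem_Ici]; linarith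
    obtain ⟨xm, hxm, hxmmin⟩ := isCompact_Icc.exists_isMinOn hKne
      (hf.mono hKsub0)
    have hδpos : 0 < f xm := fpos1 xm (hKsub hxm)
    have evK : ∀ᶠ k in atTop, ∀ x ∈ Set.Icc (τ' + ε') s, dist (f x) (fk k x) < f xm :=
      (Metric.tendstoUniformlyOn_iff.1 (hconv _ isCompact_Icc hKsub0)) (f xm) hδpos
    have evu : ∀ᶠ k in atTop, fk k u < 0 := (hpt u hupos.le).eventually_lt_const hfu
    filter_upwards [evu, evK] with k hku hkK
    have humem : u ∈ {t : ℝ | t ∈ Set.Icc 0 s ∧ fk k t ≤ 0} :=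
      ⟨⟨hupos.le, by linarith [hu.2, hτ'lt]⟩, hku.le⟩
    have hbddk : BddAbove {t : ℝ | t ∈ Set.Icc 0 s ∧ fk k t ≤ 0} := ⟨s, fun t ht => ht.1.2⟩
    have hlow : u ≤ sSup {t : ℝ | t ∈ Set.Icc 0 s ∧ fk k t ≤ 0} := le_csSup hbddk humem
    have hhigh : sSup {t : ℝ | t ∈ Set.Icc 0 s ∧ fk k t ≤ 0} ≤ τ' + ε' := by
      apply csSup_le ⟨u, humem⟩
      intro t ht
      by_contra h
      have htK : t ∈ Set.Icc (τ' + ε') s := ⟨(not_le.1 h).le, ht.1.2⟩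
      have hd := hkK t htK
      rw [Real.dist_eq] at hd
      have := abs_lt.1 hd
      have hmin : f xm ≤ f t := hxmmin htK
      have := ht.2
      linarith
    rw [Real.dist_eq, abs_lt]
    constructor
    · have := hu.1; linarith
    · linarith
  · -- convergence of the infs
    rw [Metric.tendsto_nhds]
    intro ε hε
    set ε' : ℝ := min (ε/2) ((τ - s)/2) with hε'def
    have hε'pos : 0 < ε' := lt_min (by linarith) (by linarith)
    have hε'₁ : ε' ≤ ε/2 := min_le_left _ _
    have hε'₂ : ε' ≤ (τ - s)/2 := min_le_right _ _
    obtain ⟨-, ⟨v, hv, hfv⟩⟩ := happrox ε' hε'pos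
    have hvgt : s < v := lt_trans hτgt hv.1
    have hKne : (Set.Icc s (τ - ε')).Nonempty := ⟨s, le_rfl, by linarith⟩
    have hKsub : Set.Icc s (τ - ε') ⊆ Set.Ico s τ := fun x hx =>
      ⟨hx.1, by linarith [hx.2]⟩
    have hKsub0 : Set.Icc s (τ - ε') ⊆ Set.Ici 0 := fun x hx => le_trans hs.le hx.1
    obtain ⟨xm, hxm, hxmmin⟩ := isCompact_Icc.exists_isMinOn hKne (hf.mono hKsub0)
    have hδpos : 0 < f xm := fpos2 xm (hKsub hxm)
    have evK : ∀ᶠ k in atTop, ∀ x ∈ Set.Icc s (τ - ε'), dist (f x) (fk k x) < f xm :=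
      (Metric.tendstoUniformlyOn_iff.1 (hconv _ isCompact_Icc hKsub0)) (f xm) hδpos
    have evv : ∀ᶠ k in atTop, fk k v < 0 :=
      (hpt v (by linarith : (0:ℝ) ≤ v)).eventually_lt_const hfv
    filter_upwards [evv, evK] with k hkv hkK
    have hvmem : v ∈ {t : ℝ | s ≤ t ∧ fk k t ≤ 0} := ⟨hvgt.le, hkv.le⟩
    have hbddk : BddBelow {t : ℝ | s ≤ t ∧ fk k t ≤ 0} := ⟨s, fun t ht => ht.1⟩
    have hhigh : sInf {t : ℝ | s ≤ t ∧ fk k t ≤ 0} ≤ v := csInf_le hbddk hvmem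
    have hlow : τ - ε' ≤ sInf {t : ℝ | s ≤ t ∧ fk k t ≤ 0} := by
      apply le_csInf ⟨v, hvmem⟩
      intro t ht
      by_contra h
      have htK : t ∈ Set.Icc s (τ - ε') := ⟨ht.1, (not_le.1 h).le⟩
      have hd := hkK t htK
      rw [Real.dist_eq] at hd
      have := abs_lt.1 hd
      have hmin : f xm ≤ f t := hxmmin htK
      have := ht.2
      linarith
    rw [Real.dist_eq, abs_lt]
    constructor
    · linarith
    · have := hv.2; linarith
end

section
/- Let F be a random nondecreasing function from [0, ∞) to [0, ∞) with F(0) = 0, defined on some probability space, such that: (a) for all u, u' > 0 the random variables F(u)/u and F(u')/u' have the same distribution; and (b) F(u)/u → c almost surely as u → ∞, where c is a deterministic element of [0, ∞]. Then c is finite and almost surely F(u) = c·u for all u ≥ 0 simultaneously. -/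
open MeasureTheory ProbabilityTheory Filter Topology
open scoped ENNReal

lemma aux_one {Ω : Type*} [MeasurableSpace Ω] (P : Measure Ω) [IsProbabilityMeasure P]
    (A : ℕ → Set Ω) (hA : ∀ n, MeasurableSet (A n)) (p : ℝ≥0∞)
    (hp : ∀ n, P (A n) = p) (h : ∀ᵐ ω ∂P, ∀ᶠ n in atTop, ω ∈ A n) : p = 1 := by
  set B : ℕ → Set Ω := fun N => ⋂ n, ⋂ (_ : N ≤ n), A n with hB
  have hmon : Monotone B := by
    intro N M hNM
    exact fun ω hω => Set.mem_iInter₂.mpr fun n hn => Set.mem_iInter₂.mp hω n (hNM.trans hn)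
  have hsub : ∀ N, B N ⊆ A N := fun N ω hω => Set.mem_iInter₂.mp hω N le_rfl
  have hae : ∀ᵐ ω ∂P, ω ∈ ⋃ N, B N := by
    filter_upwards [h] with ω hω
    obtain ⟨N, hN⟩ := eventually_atTop.mp hω
    exact Set.mem_iUnion.mpr ⟨N, Set.mem_iInter₂.mpr fun n hn => hN n hn⟩
  have hU : P (⋃ N, B N) = 1 := by
    rw [← measure_univ (μ := P)]
    exact measure_congr (Filter.eventuallyEq_univ.mpr hae)
  have htend : Tendsto (fun N => P (B N)) atTop (𝓝 (P (⋃ N, B N))) :=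
    tendsto_measure_iUnion_atTop hmon
  rw [hU] at htend
  have hle : (1 : ℝ≥0∞) ≤ p :=
    le_of_tendsto htend (Eventually.of_forall fun N => (hp N) ▸ measure_mono (hsub N))
  exact le_antisymm ((hp 0) ▸ prob_le_one) hle

lemma aux_zero {Ω : Type*} [MeasurableSpace Ω] (P : Measure Ω) [IsProbabilityMeasure P]
    (A : ℕ → Set Ω) (hA : ∀ n, MeasurableSet (A n)) (p : ℝ≥0∞)
    (hp : ∀ n, P (A n) = p) (h : ∀ᵐ ω ∂P, ∀ᶠ n in atTop, ω ∉ A n) : p = 0 := by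
  have hc : ∀ n, P (A n)ᶜ = 1 - p := by
    intro n
    rw [prob_compl_eq_one_sub (hA n), hp n]
  have h1 : (1 : ℝ≥0∞) - p = 1 := aux_one P (fun n => (A n)ᶜ) (fun n => (hA n).compl) _ hc h
  have hple : p ≤ 1 := (hp 0) ▸ prob_le_one
  have : p = 1 - (1 - p) := by
    rw [ENNReal.sub_sub_cancel ENNReal.one_ne_top hple]
  rw [this, h1, tsub_self]

/-- Let `F` be a random nondecreasing function from `[0, ∞)` to `[0, ∞)`
with `F(0) = 0` such that: (a) for all `u, u' > 0` the random variables `F(u)/u` and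
`F(u')/u'` have the same distribution; and (b) `F(u)/u → c` almost surely as `u → ∞`, where
`c` is a deterministic element of `[0, ∞]`.  Then `c` is finite and almost surely
`F(u) = c·u` for all `u ≥ 0` simultaneously. -/
theorem stmt_9
    {Ω : Type*} [MeasurableSpace Ω] (P : Measure Ω) [IsProbabilityMeasure P]
    (F : Ω → ℝ → ℝ)
    (hFmeas : ∀ u : ℝ, Measurable (fun ω => F ω u))
    (hF0 : ∀ ω, F ω 0 = 0)
    (hFnonneg : ∀ ω, ∀ u : ℝ, 0 ≤ u → 0 ≤ F ω u)
    (hFmono : ∀ ω, ∀ u v : ℝ, 0 ≤ u → u ≤ v → F ω u ≤ F ω v)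
    (hident : ∀ u u' : ℝ, 0 < u → 0 < u' →
      IdentDistrib (fun ω => F ω u / u) (fun ω => F ω u' / u') P P)
    (c : ℝ≥0∞)
    (hconv : ∀ᵐ ω ∂P, Tendsto (fun u : ℝ => ENNReal.ofReal (F ω u / u)) atTop (𝓝 c)) :
    c ≠ ⊤ ∧ ∀ᵐ ω ∂P, ∀ u : ℝ, 0 ≤ u → F ω u = c.toReal * u := by
  -- notation
  set p : ℝ → ℝ≥0∞ := fun t => P {ω | F ω 1 ≤ t} with hpdef
  have hmeasset : ∀ (u t : ℝ), MeasurableSet {ω | F ω u / u ≤ t} :=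
    fun u t => measurableSet_le ((hFmeas u).div_const u) measurable_const
  have hp : ∀ u : ℝ, 0 < u → ∀ t : ℝ, P {ω | F ω u / u ≤ t} = p t := by
    intro u hu t
    have := (hident u 1 hu one_pos).measure_mem_eq (measurableSet_Iic (a := t))
    simpa [Set.preimage, div_one] using this
  -- convergence along the sequence n+1
  have hun : Tendsto (fun n : ℕ => (n : ℝ) + 1) atTop atTop :=
    tendsto_atTop_add_const_right atTop 1 tendsto_natCast_atTop_atTop
  have hconvN : ∀ᵐ ω ∂P,
      Tendsto (fun n : ℕ => ENNReal.ofReal (F ω ((n:ℝ)+1) / ((n:ℝ)+1))) atTop (𝓝 c) := by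
    filter_upwards [hconv] with ω hω using hω.comp hun
  -- p t = 0 whenever ofReal t < c
  have hzero : ∀ t : ℝ, ENNReal.ofReal t < c → p t = 0 := by
    intro t ht
    refine aux_zero P (fun n => {ω | F ω ((n:ℝ)+1) / ((n:ℝ)+1) ≤ t}) (fun n => hmeasset _ _) _
      (fun n => hp _ (by positivity) t) ?_
    filter_upwards [hconvN] with ω hω
    have hev : ∀ᶠ n : ℕ in atTop,
        ENNReal.ofReal (F ω ((n:ℝ)+1) / ((n:ℝ)+1)) ∈ Set.Ioi (ENNReal.ofReal t) :=
      hω.eventually_mem (isOpen_Ioi.mem_nhds ht)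
    filter_upwards [hev] with n hn hle
    exact absurd (ENNReal.ofReal_le_ofReal hle) (not_le.mpr hn)
  -- p t = 1 whenever c < ofReal t
  have hone : ∀ t : ℝ, c < ENNReal.ofReal t → p t = 1 := by
    intro t ht
    refine aux_one P (fun n => {ω | F ω ((n:ℝ)+1) / ((n:ℝ)+1) ≤ t}) (fun n => hmeasset _ _) _
      (fun n => hp _ (by positivity) t) ?_
    filter_upwards [hconvN] with ω hω
    have hev : ∀ᶠ n : ℕ in atTop,
        ENNReal.ofReal (F ω ((n:ℝ)+1) / ((n:ℝ)+1)) ∈ Set.Iio (ENNReal.ofReal t) :=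
      hω.eventually_mem (isOpen_Iio.mem_nhds ht)
    filter_upwards [hev] with n hn
    show F ω ((n:ℝ)+1) / ((n:ℝ)+1) ≤ t
    by_contra hcon
    exact absurd (ENNReal.ofReal_le_ofReal (le_of_not_ge hcon)) (not_le.mpr hn)
  -- c is finite
  have htop : c ≠ ⊤ := by
    intro hc
    have hz : ∀ n : ℕ, P {ω | F ω 1 ≤ (n : ℝ)} = 0 := by
      intro n
      have := hzero n (hc ▸ ENNReal.ofReal_lt_top)
      simpa [hpdef] using this
    have huniv : (Set.univ : Set Ω) ⊆ ⋃ n : ℕ, {ω | F ω 1 ≤ (n:ℝ)} := by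
      intro ω _
      obtain ⟨n, hn⟩ := exists_nat_ge (F ω 1)
      exact Set.mem_iUnion.mpr ⟨n, hn⟩
    have : (1 : ℝ≥0∞) ≤ 0 := by
      calc (1:ℝ≥0∞) = P Set.univ := (measure_univ).symm
        _ ≤ P (⋃ n : ℕ, {ω | F ω 1 ≤ (n:ℝ)}) := measure_mono huniv
        _ ≤ ∑' n : ℕ, P {ω | F ω 1 ≤ (n:ℝ)} := measure_iUnion_le _
        _ = 0 := by simp [hz]
    simp at this
  set c₀ : ℝ := c.toReal with hc₀
  have hcofReal : ENNReal.ofReal c₀ = c := ENNReal.ofReal_toReal htop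
  have hc₀nonneg : 0 ≤ c₀ := ENNReal.toReal_nonneg
  -- fixed-u result
  have hfix : ∀ u : ℝ, 0 < u → ∀ᵐ ω ∂P, F ω u = c₀ * u := by
    intro u hu
    have hub : ∀ᵐ ω ∂P, F ω u / u ≤ c₀ := by
      have h1 : ∀ n : ℕ, ∀ᵐ ω ∂P, F ω u / u ≤ c₀ + 1/((n:ℝ)+1) := by
        intro n
        have hlt : c < ENNReal.ofReal (c₀ + 1/((n:ℝ)+1)) := by
          rw [← hcofReal]
          refine (ENNReal.ofReal_lt_ofReal_iff (by positivity)).mpr (lt_add_of_pos_right c₀ (by positivity))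
        have hPs : P {ω | F ω u / u ≤ c₀ + 1/((n:ℝ)+1)} = 1 := by
          rw [hp u hu]; exact hone _ hlt
        have hcompl : P {ω | F ω u / u ≤ c₀ + 1/((n:ℝ)+1)}ᶜ = 0 := by
          rw [prob_compl_eq_one_sub (hmeasset u _), hPs, tsub_self]
        rw [ae_iff, ← Set.compl_setOf]
        exact hcompl
      filter_upwards [ae_all_iff.mpr h1] with ω hω
      by_contra hcon
      push_neg at hcon
      obtain ⟨n, hn⟩ := exists_nat_one_div_lt (sub_pos.mpr hcon)
      have := hω n
      linarith
    have hlb : ∀ᵐ ω ∂P, c₀ ≤ F ω u / u := by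
      rcases eq_or_lt_of_le hc₀nonneg with h0 | h0
      · exact Eventually.of_forall fun ω => h0 ▸ div_nonneg (hFnonneg ω u hu.le) hu.le
      · have h1 : ∀ n : ℕ, ∀ᵐ ω ∂P, ¬ (F ω u / u ≤ c₀ - 1/((n:ℝ)+1)) := by
          intro n
          have hlt : ENNReal.ofReal (c₀ - 1/((n:ℝ)+1)) < c := by
            rw [← hcofReal]
            exact (ENNReal.ofReal_lt_ofReal_iff h0).mpr (sub_lt_self _ (by positivity))
          have hPs : P {ω | F ω u / u ≤ c₀ - 1/((n:ℝ)+1)} = 0 := by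
            rw [hp u hu]; exact hzero _ hlt
          rw [ae_iff]
          simp only [not_not]
          exact hPs
        filter_upwards [ae_all_iff.mpr h1] with ω hω
        by_contra hcon
        push_neg at hcon
        obtain ⟨n, hn⟩ := exists_nat_one_div_lt (sub_pos.mpr hcon)
        exact hω n (by linarith)
    filter_upwards [hub, hlb] with ω h1 h2
    have : F ω u / u = c₀ := le_antisymm h1 h2
    rw [div_eq_iff hu.ne'] at this
    linarith [this]
  -- all positive rationals at once
  have hq : ∀ᵐ ω ∂P, ∀ q : ℚ, 0 < q → F ω (q:ℝ) = c₀ * q := by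
    rw [ae_all_iff]
    intro q
    by_cases hq : 0 < q
    · filter_upwards [hfix (q:ℝ) (by exact_mod_cast hq)] with ω hω _ using hω
    · exact Eventually.of_forall fun ω h => absurd h hq
  refine ⟨htop, ?_⟩
  filter_upwards [hq] with ω hω
  intro u hu
  rcases eq_or_lt_of_le hu with h0 | h0
  · rw [← h0, hF0, mul_zero]
  refine le_antisymm ?_ ?_
  · -- F ω u ≤ c₀ * u
    refine le_of_forall_pos_le_add fun ε hε => ?_
    have hδ : 0 < ε / (c₀ + 1) := by positivity
    obtain ⟨q, hq1, hq2⟩ := exists_rat_btwn (lt_add_of_pos_right u hδ)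
    have hqpos : 0 < q := by exact_mod_cast h0.trans hq1
    have := hω q hqpos
    have hFle : F ω u ≤ c₀ * q := this ▸ hFmono ω u q hu hq1.le
    have : c₀ * (q:ℝ) ≤ c₀ * (u + ε/(c₀+1)) := mul_le_mul_of_nonneg_left hq2.le hc₀nonneg
    have hce : c₀ * (ε/(c₀+1)) ≤ ε := by
      rw [mul_div_assoc']
      rw [div_le_iff₀ (by positivity)]
      nlinarith
    nlinarith
  · -- c₀ * u ≤ F ω u
    refine le_of_forall_pos_le_add fun ε hε => ?_
    have hδ : 0 < ε / (c₀ + 1) := by positivity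
    set b : ℝ := max (u - ε/(c₀+1)) (u/2) with hb
    have hblt : b < u := max_lt (by linarith) (by linarith)
    have hbpos : 0 < b := lt_of_lt_of_le (by linarith) (le_max_right _ _)
    obtain ⟨q, hq1, hq2⟩ := exists_rat_btwn hblt
    have hqpos : 0 < q := by exact_mod_cast hbpos.trans hq1
    have hωq := hω q hqpos
    have hFge : c₀ * (q:ℝ) ≤ F ω u := hωq ▸ hFmono ω q u (by positivity) hq2.le
    have hbge : u - ε/(c₀+1) ≤ b := le_max_left _ _
    have h1 : c₀ * (u - ε/(c₀+1)) ≤ c₀ * q :=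
      mul_le_mul_of_nonneg_left (hbge.trans hq1.le) hc₀nonneg
    have hce : c₀ * (ε/(c₀+1)) ≤ ε := by
      rw [mul_div_assoc']
      rw [div_le_iff₀ (by positivity)]
      nlinarith
    nlinarith
end
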